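/- arXiv:2211.12065 — 11 statements merged into one kernel-verified Lean document; each statement's English description precedes it below -/
import Mathlib

section
/- Every finite simple graph G on n vertices has a clique cover of size at most ⌊n²/4⌋, i.e., there is a collection of at most ⌊n²/4⌋ cliques of G such that every edge of G has both endpoints in some clique of the collection. -/
open SimpleGraph Finset

/-- A clique cover of `G`: a finite collection of cliques of `G` such that every
edge of `G` has both endpoints in some clique of the collection. -/
def IsCliqueCover {V : Type*} (G : SimpleGraph V) (C : Finset (Finset V)) : Prop :=
  (∀ X ∈ C, G.IsClique (X : Set V)) ∧
    ∀ u v : V, G.Adj u v → ∃ X ∈ C, u ∈ X ∧ v ∈ X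

lemma aux_cover {V : Type*} [DecidableEq V] (G : SimpleGraph V) (s : Finset V) :
    ∃ C : Finset (Finset V),
      (∀ X ∈ C, G.IsClique (X : Set V)) ∧
      (∀ u v : V, u ∈ s → v ∈ s → G.Adj u v → ∃ X ∈ C, u ∈ X ∧ v ∈ X) ∧
      C.card ≤ s.card ^ 2 / 4 := by
  classical
  induction s using Finset.strongInductionOn with
  | _ s ih =>
    by_cases h : ∃ u ∈ s, ∃ v ∈ s, G.Adj u v
    · obtain ⟨u, hu, v, hv, huv⟩ := h
      have hne : u ≠ v := huv.ne
      set s' := s \ {u, v} with hs'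
      have hss : s' ⊂ s := by
        refine Finset.sdiff_ssubset ?_ ⟨u, by simp⟩
        intro x hx
        simp only [Finset.mem_insert, Finset.mem_singleton] at hx
        rcases hx with rfl | rfl <;> assumption
      obtain ⟨C', hC1, hC2, hC3⟩ := ih s' hss
      set f : V → Finset V := fun w =>
        if G.Adj u w ∧ G.Adj v w then {u, v, w}
        else if G.Adj u w then {u, w}
        else if G.Adj v w then {v, w}
        else {w} with hf
      refine ⟨insert {u, v} (C' ∪ s'.image f), ?_, ?_, ?_⟩
      · intro X hX
        simp only [Finset.mem_insert, Finset.mem_union, Finset.mem_image] at hX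
        rcases hX with rfl | hX | ⟨w, hw, rfl⟩
        · intro a ha b hb hab
          simp only [Finset.coe_insert, Finset.coe_singleton, Set.mem_insert_iff,
            Set.mem_singleton_iff] at ha hb
          rcases ha with rfl | rfl <;> rcases hb with rfl | rfl <;>
            first | exact absurd rfl hab | exact huv | exact huv.symm
        · exact hC1 X hX
        · simp only [hf]
          split_ifs with h1 h2 h3
          · intro a ha b hb hab
            simp only [Finset.coe_insert, Finset.coe_singleton, Set.mem_insert_iff,
              Set.mem_singleton_iff] at ha hb
            rcases ha with rfl | rfl | rfl <;> rcases hb with rfl | rfl | rfl <;>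
              first | exact absurd rfl hab | exact huv | exact huv.symm | exact h1.1 |
                exact h1.1.symm | exact h1.2 | exact h1.2.symm
          · intro a ha b hb hab
            simp only [Finset.coe_insert, Finset.coe_singleton, Set.mem_insert_iff,
              Set.mem_singleton_iff] at ha hb
            rcases ha with rfl | rfl <;> rcases hb with rfl | rfl <;>
              first | exact absurd rfl hab | exact h2 | exact h2.symm
          · intro a ha b hb hab
            simp only [Finset.coe_insert, Finset.coe_singleton, Set.mem_insert_iff,
              Set.mem_singleton_iff] at ha hb
            rcases ha with rfl | rfl <;> rcases hb with rfl | rfl <;>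
              first | exact absurd rfl hab | exact h3 | exact h3.symm
          · intro a ha b hb hab
            simp only [Finset.coe_singleton, Set.mem_singleton_iff] at ha hb
            subst ha; subst hb; exact absurd rfl hab
      · intro a b ha hb hab
        have hmem : ∀ x ∈ s, x ∉ s' → x = u ∨ x = v := by
          intro x hx hx'
          simp only [hs', Finset.mem_sdiff, Finset.mem_insert, Finset.mem_singleton] at hx'
          tauto
        have hself : ∀ w, w ∈ f w := by
          intro w
          simp only [hf]
          split_ifs <;> simp
        by_cases ha' : a ∈ s' <;> by_cases hb' : b ∈ s'
        · obtain ⟨X, hX, h1, h2⟩ := hC2 a b ha' hb' hab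
          exact ⟨X, by simp [hX], h1, h2⟩
        · refine ⟨f a, by simp [Finset.mem_image.mpr ⟨a, ha', rfl⟩], hself a, ?_⟩
          rcases hmem b hb hb' with hbe | hbe
          · have hba : G.Adj u a := by rw [← hbe]; exact hab.symm
            simp only [hf]
            split_ifs with h1 h2 h3 <;> first | (simp [hbe]; done) | tauto | (simp [hbe]; tauto)
          · have hba : G.Adj v a := by rw [← hbe]; exact hab.symm
            simp only [hf]
            split_ifs with h1 h2 h3 <;> first | (simp [hbe]; done) | tauto | (simp [hbe]; tauto)
        · refine ⟨f b, by simp [Finset.mem_image.mpr ⟨b, hb', rfl⟩], ?_, hself b⟩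
          rcases hmem a ha ha' with hae | hae
          · have hub : G.Adj u b := by rw [← hae]; exact hab
            simp only [hf]
            split_ifs with h1 h2 h3 <;> first | (simp [hae]; done) | tauto | (simp [hae]; tauto)
          · have hvb : G.Adj v b := by rw [← hae]; exact hab
            simp only [hf]
            split_ifs with h1 h2 h3 <;> first | (simp [hae]; done) | tauto | (simp [hae]; tauto)
        · rcases hmem a ha ha' with hae | hae <;> rcases hmem b hb hb' with hbe | hbe
          · exact absurd (hae.trans hbe.symm) hab.ne
          · exact ⟨{u, v}, by simp, by simp [hae], by simp [hbe]⟩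
          · exact ⟨{u, v}, by simp, by simp [hae], by simp [hbe]⟩
          · exact absurd (hae.trans hbe.symm) hab.ne
      · have h1 : (insert {u, v} (C' ∪ s'.image f)).card ≤ 1 + (C'.card + s'.card) :=
          le_trans (Finset.card_insert_le _ _)
            (by
              have := Finset.card_union_le C' (s'.image f)
              have := Finset.card_image_le (f := f) (s := s')
              omega)
        have hcard : s'.card = s.card - 2 := by
          rw [hs', Finset.card_sdiff_of_subset (by
            intro x hx
            simp only [Finset.mem_insert, Finset.mem_singleton] at hx
            rcases hx with rfl | rfl <;> assumption)]
          rw [show ({u, v} : Finset V).card = 2 by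
            rw [Finset.card_insert_of_notMem (by simp [hne]), Finset.card_singleton]]
        have hs2 : 2 ≤ s.card := by
          have : ({u, v} : Finset V) ⊆ s := by
            intro x hx
            simp only [Finset.mem_insert, Finset.mem_singleton] at hx
            rcases hx with rfl | rfl <;> assumption
          calc 2 = ({u, v} : Finset V).card := by simp [hne]
            _ ≤ s.card := Finset.card_le_card this
        obtain ⟨k, hk⟩ : ∃ k, s.card = k + 2 := ⟨s.card - 2, by omega⟩
        have key : k ^ 2 / 4 + (k + 1) = (k + 2) ^ 2 / 4 := by
          have : (k + 2) ^ 2 = k ^ 2 + (k + 1) * 4 := by ring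
          rw [this, Nat.add_mul_div_right _ _ (by norm_num)]
        have : C'.card ≤ k ^ 2 / 4 := by
          rw [hk] at hcard; simpa [hcard] using hC3
        rw [hk]
        omega
    · push_neg at h
      exact ⟨∅, by simp, fun u v hu hv hab => absurd hab (h u hu v hv), by simp⟩

/-- Every graph on `n` vertices has a clique cover of size at most `⌊n²/4⌋`. -/
theorem stmt_0 {V : Type*} [Fintype V] [DecidableEq V] (G : SimpleGraph V) :
    ∃ C : Finset (Finset V), IsCliqueCover G C ∧ C.card ≤ Fintype.card V ^ 2 / 4 := by
  obtain ⟨C, h1, h2, h3⟩ := aux_cover G Finset.univ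
  exact ⟨C, ⟨h1, fun u v hab => h2 u v (Finset.mem_univ u) (Finset.mem_univ v) hab⟩,
    by rw [← Finset.card_univ]; exact h3⟩
end

section
/- If a graph G on n vertices contains two adjacent vertices x and y, then all edges incident with x or y can be covered by at most n−1 cliques of G. -/
open SimpleGraph Finset

/-! Every edge incident with the edge `xy` either is `xy` itself or joins `x` or `y` to some
`z ∉ {x, y}`; the latter are covered by the cliques `{z} ∪ (N(z) ∩ {x, y})`, one per such `z`,
so `{x, y}` together with these `n - 2` cliques does the job. More generally this works for any
clique `s` in place of `{x, y}`, with `n - |s| + 1` cliques. -/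

namespace SimpleGraph

variable {V : Type*} {G : SimpleGraph V}

theorem isClique_insert_filter_adj [DecidableEq V] [DecidableRel G.Adj] {s : Finset V}
    (hs : G.IsClique (s : Set V)) (z : V) :
    G.IsClique (↑(insert z {w ∈ s | G.Adj w z}) : Set V) := by
  rw [coe_insert, isClique_insert]
  exact ⟨hs.subset (coe_subset.2 (filter_subset _ _)), fun w hw _ => (mem_filter.1 hw).2.symm⟩

theorem exists_cliques_cover_adj_of_isClique [Fintype V] [DecidableEq V] [DecidableRel G.Adj]
    {s : Finset V} (hs : G.IsClique (s : Set V)) :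
    ∃ C : Finset (Finset V),
      (∀ X ∈ C, G.IsClique (X : Set V)) ∧
      #C ≤ Fintype.card V - #s + 1 ∧
      ∀ u v : V, G.Adj u v → u ∈ s → ∃ X ∈ C, u ∈ X ∧ v ∈ X := by
  refine ⟨insert s ((univ \ s).image fun z => insert z {w ∈ s | G.Adj w z}), ?_, ?_, ?_⟩
  · simp only [mem_insert, mem_image]
    rintro X (rfl | ⟨z, -, rfl⟩)
    exacts [hs, isClique_insert_filter_adj hs z]
  · calc #(insert s ((univ \ s).image _)) ≤ #(univ \ s) + 1 :=
          (card_insert_le _ _).trans (Nat.add_le_add_right card_image_le 1)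
      _ = Fintype.card V - #s + 1 := by rw [card_univ_sdiff]
  · intro u v huv hu
    by_cases hv : v ∈ s
    · exact ⟨s, mem_insert_self _ _, hu, hv⟩
    · exact ⟨_, mem_insert_of_mem (mem_image_of_mem _ (mem_sdiff.2 ⟨mem_univ v, hv⟩)),
        mem_insert_of_mem (mem_filter.2 ⟨hu, huv⟩), mem_insert_self _ _⟩

end SimpleGraph

theorem stmt_1_general {V : Type*} [Fintype V] (G : SimpleGraph V) (x y : V)
    (hxy : G.Adj x y) :
    ∃ C : Finset (Finset V),
      (∀ X ∈ C, G.IsClique (X : Set V)) ∧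
      C.card ≤ Fintype.card V - 1 ∧
      ∀ u v : V, G.Adj u v → (u = x ∨ u = y ∨ v = x ∨ v = y) →
        ∃ X ∈ C, u ∈ X ∧ v ∈ X := by
  classical
  have hpair : G.IsClique (({x, y} : Finset V) : Set V) := by
    rw [coe_pair]
    exact isClique_pair.2 fun _ => hxy
  obtain ⟨C, hclique, hcard, hcover⟩ := exists_cliques_cover_adj_of_isClique hpair
  have hcard_pair : #{x, y} = 2 := card_pair hxy.ne
  have hn : 2 ≤ Fintype.card V := hcard_pair ▸ card_le_univ _
  refine ⟨C, hclique, by omega, fun u v huv hinc => ?_⟩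
  have hmem : u ∈ ({x, y} : Finset V) ∨ v ∈ ({x, y} : Finset V) := by
    simp only [mem_insert, mem_singleton]
    tauto
  rcases hmem with hu | hv
  · exact hcover u v huv hu
  · obtain ⟨X, hX, hv, hu⟩ := hcover v u huv.symm hv
    exact ⟨X, hX, hu, hv⟩

/-- If `x` and `y` are adjacent vertices of a graph `G` on `n` vertices, then all edges
incident with `x` or `y` can be covered by at most `n - 1` cliques of `G`. -/
theorem stmt_1 {V : Type*} [Fintype V] [DecidableEq V] (G : SimpleGraph V) (x y : V)
    (hxy : G.Adj x y) :
    ∃ C : Finset (Finset V),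
      (∀ X ∈ C, G.IsClique (X : Set V)) ∧
      C.card ≤ Fintype.card V - 1 ∧
      ∀ u v : V, G.Adj u v → (u = x ∨ u = y ∨ v = x ∨ v = y) →
        ∃ X ∈ C, u ∈ X ∧ v ∈ X :=
  stmt_1_general G x y hxy
end

section
/- For integers t ≥ 1 and any graph G with a maximum stable set S (with |S| = α(G) ≥ t), the vertex set of G is the union of at most binom(α(G)+1, t) ≤ α(G)^t sets, each of which includes no stable set of size s, provided G is K_{s,t}-free with s ≥ t ≥ 2. -/
open SimpleGraph Finset

/-- A stable (independent) set: pairwise nonadjacent vertices. -/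
def IsStableSet {V : Type*} (G : SimpleGraph V) (T : Finset V) : Prop :=
  ∀ ⦃u⦄, u ∈ T → ∀ ⦃v⦄, v ∈ T → u ≠ v → ¬G.Adj u v

/-- `G` is `K_{s,t}`-free. -/
def KstFree {V : Type*} (G : SimpleGraph V) (s t : ℕ) : Prop :=
  ¬ ∃ A B : Finset V, Disjoint A B ∧ A.card = s ∧ B.card = t ∧
      IsStableSet G A ∧ IsStableSet G B ∧ ∀ a ∈ A, ∀ b ∈ B, G.Adj a b

/-!
Fix a maximum stable set `S` and `t ≥ 2`. A vertex with at most `t - 1` neighbours in `S`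
(in particular every vertex of `S`) lies in a set `R_X`, for some `(t-1)`-subset `X` of `S`,
of vertices outside `S \ X` whose neighbourhood in `S` is contained in `X`; any other vertex
is complete to some `t`-subset of `S`. A stable set `T ⊆ R_X` can be added to `S \ X`, so
`|T| ≤ |X| = t - 1 < s`; a stable `s`-set complete to a `t`-subset of `S` would be an induced
`K_{s,t}`. There are `binom(α, t-1) + binom(α, t) = binom(α+1, t)` such sets.
-/

namespace Nat

lemma succ_choose_le_pow {t : ℕ} (ht : 2 ≤ t) (n : ℕ) : (n + 1).choose t ≤ n ^ t := by
  rcases Nat.eq_zero_or_pos n with rfl | hn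
  · simp [Nat.choose_eq_zero_of_lt (show 1 < t by omega)]
  obtain ⟨k, rfl⟩ : ∃ k, t = k + 1 := ⟨t - 1, by omega⟩
  suffices 2 * (n + 1).choose (k + 1) ≤ 2 * n ^ (k + 1) by omega
  calc 2 * (n + 1).choose (k + 1) ≤ (n + 1).choose (k + 1) * (k + 1) := by
        rw [mul_comm]; exact Nat.mul_le_mul_left _ ht
    _ = (n + 1) * n.choose k := (Nat.add_one_mul_choose_eq n k).symm
    _ ≤ (2 * n) * n ^ k := Nat.mul_le_mul (by omega) (Nat.choose_le_pow n k)
    _ = 2 * n ^ (k + 1) := by ring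

end Nat

section StableCover

variable {V : Type*} {G : SimpleGraph V}

lemma IsStableSet.union [DecidableEq V] {A B : Finset V} (hA : IsStableSet G A)
    (hB : IsStableSet G B) (hAB : ∀ a ∈ A, ∀ b ∈ B, ¬G.Adj a b) : IsStableSet G (A ∪ B) := by
  intro u hu v hv hne huv
  rcases mem_union.1 hu with hu | hu <;> rcases mem_union.1 hv with hv | hv
  · exact hA hu hv hne huv
  · exact hAB u hu v hv huv
  · exact hAB v hv u hu huv.symm
  · exact hB hu hv hne huv

lemma IsStableSet.mono {A B : Finset V} (hB : IsStableSet G B) (hAB : A ⊆ B) :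
    IsStableSet G A :=
  fun _ hu _ hv => hB (hAB hu) (hAB hv)

variable [Fintype V]

open Classical in
/-- The paper's `R_X`; vertices of `S \ X` are left out so that `R_X` is disjoint from it. -/
noncomputable def confinedTo (G : SimpleGraph V) (S X : Finset V) : Finset V :=
  univ.filter fun v => v ∉ S \ X ∧ ∀ u ∈ S, G.Adj v u → u ∈ X

open Classical in
noncomputable def commonNbrsOff (G : SimpleGraph V) (S X : Finset V) : Finset V :=
  univ.filter fun v => v ∉ S ∧ ∀ u ∈ X, G.Adj v u

lemma card_le_of_subset_confinedTo {S X T : Finset V} (hS : IsStableSet G S)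
    (hSmax : ∀ T : Finset V, IsStableSet G T → T.card ≤ S.card) (hXS : X ⊆ S)
    (hT : IsStableSet G T) (hTX : T ⊆ confinedTo G S X) : T.card ≤ X.card := by
  classical
  have hconf : ∀ v ∈ T, v ∉ S \ X ∧ ∀ u ∈ S, G.Adj v u → u ∈ X := fun v hv => by
    simpa [confinedTo] using hTX hv
  have hdisj : Disjoint (S \ X) T :=
    disjoint_left.2 fun u hu huT => (hconf u huT).1 hu
  have hstab : IsStableSet G ((S \ X) ∪ T) :=
    (hS.mono sdiff_subset).union hT fun a ha b hb hab =>
      (mem_sdiff.1 ha).2 ((hconf b hb).2 a (mem_sdiff.1 ha).1 hab.symm)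
  have := hSmax _ hstab
  rw [card_union_of_disjoint hdisj, card_sdiff_of_subset hXS] at this
  have := card_le_card hXS
  omega

lemma not_exists_stable_subset_commonNbrsOff {s t : ℕ} (hfree : KstFree G s t)
    {S X : Finset V} (hS : IsStableSet G S) (hXS : X ⊆ S) (hX : X.card = t) :
    ¬∃ T ⊆ commonNbrsOff G S X, IsStableSet G T ∧ T.card = s := by
  classical
  rintro ⟨T, hTX, hT, hTs⟩
  have hcomm : ∀ v ∈ T, v ∉ S ∧ ∀ u ∈ X, G.Adj v u := fun v hv => by
    simpa [commonNbrsOff] using hTX hv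
  exact hfree ⟨T, X, disjoint_left.2 fun v hvT hvX => (hcomm v hvT).1 (hXS hvX),
    hTs, hX, hT, hS.mono hXS, fun v hv => (hcomm v hv).2⟩

/-- Each vertex is covered by looking at its closed neighbourhood in `S`, which is `{v}` when
`v ∈ S` and `N(v) ∩ S` otherwise. -/
lemma exists_mem_confinedTo_or_commonNbrsOff {t : ℕ} (ht : 2 ≤ t) {S : Finset V}
    (hS : IsStableSet G S) (hSt : t ≤ S.card) (v : V) :
    (∃ X ∈ S.powersetCard (t - 1), v ∈ confinedTo G S X) ∨
      ∃ X ∈ S.powersetCard t, v ∈ commonNbrsOff G S X := by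
  classical
  set N := S.filter fun u => u = v ∨ G.Adj v u
  by_cases hN : N.card ≤ t - 1
  · obtain ⟨X, hNX, hXS, hX⟩ := exists_subsuperset_card_eq (filter_subset _ S) hN (by omega)
    refine .inl ⟨X, mem_powersetCard.2 ⟨hXS, hX⟩, ?_⟩
    simp only [confinedTo, mem_filter, mem_univ, true_and, mem_sdiff, not_and, not_not]
    exact ⟨fun hv => hNX (mem_filter.2 ⟨hv, .inl rfl⟩),
      fun u hu huv => hNX (mem_filter.2 ⟨hu, .inr huv⟩)⟩
  · have hvS : v ∉ S := fun hv => hN <| by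
      have : N ⊆ {v} := fun u hu => by
        obtain ⟨huS, rfl | hvu⟩ := mem_filter.1 hu
        · exact mem_singleton_self u
        · exact absurd hvu (hS hv huS (G.ne_of_adj hvu))
      have := card_le_card this
      rw [card_singleton] at this
      omega
    obtain ⟨X, hXN, hX⟩ := exists_subset_card_eq (s := N) (n := t) (by omega)
    refine .inr ⟨X, mem_powersetCard.2 ⟨hXN.trans (filter_subset _ S), hX⟩, ?_⟩
    simp only [commonNbrsOff, mem_filter, mem_univ, true_and]
    refine ⟨hvS, fun u hu => ?_⟩
    obtain ⟨huS, rfl | hvu⟩ := mem_filter.1 (hXN hu)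
    · exact absurd huS hvS
    · exact hvu

end StableCover

/-- If `G` is `K_{s,t}`-free with `s ≥ t ≥ 2` and has a maximum stable set `S` with
`|S| = α(G) ≥ t`, then `V(G)` is the union of at most `binom(α(G)+1,t) ≤ α(G)^t`
sets, each containing no stable set of size `s`. -/
theorem stmt_5 {V : Type*} [Fintype V] (G : SimpleGraph V) (s t : ℕ) (hts : t ≤ s)
    (ht : 2 ≤ t) (hfree : KstFree G s t) (S : Finset V) (hS : IsStableSet G S)
    (hSmax : ∀ T : Finset V, IsStableSet G T → T.card ≤ S.card) (hSt : t ≤ S.card) :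
    (S.card + 1).choose t ≤ S.card ^ t ∧
    ∃ F : Finset (Finset V),
      F.card ≤ (S.card + 1).choose t ∧
      (∀ v : V, ∃ A ∈ F, v ∈ A) ∧
      ∀ A ∈ F, ¬ ∃ T : Finset V, T ⊆ A ∧ IsStableSet G T ∧ T.card = s := by
  classical
  obtain ⟨k, rfl⟩ : ∃ k, t = k + 1 := ⟨t - 1, by omega⟩
  refine ⟨Nat.succ_choose_le_pow ht _, (S.powersetCard k).image (confinedTo G S) ∪
    (S.powersetCard (k + 1)).image (commonNbrsOff G S), ?_, ?_, ?_⟩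
  · calc _ ≤ (S.powersetCard k).card + (S.powersetCard (k + 1)).card :=
          (card_union_le _ _).trans (add_le_add card_image_le card_image_le)
      _ = (S.card + 1).choose (k + 1) := by simp [Nat.choose_succ_succ]
  · intro v
    rcases exists_mem_confinedTo_or_commonNbrsOff ht hS hSt v with ⟨X, hX, hv⟩ | ⟨X, hX, hv⟩
    · exact ⟨_, mem_union_left _ (mem_image_of_mem _ hX), hv⟩
    · exact ⟨_, mem_union_right _ (mem_image_of_mem _ hX), hv⟩
  · simp only [mem_union, mem_image, mem_powersetCard]
    rintro A (⟨X, ⟨hXS, hX⟩, rfl⟩ | ⟨X, ⟨hXS, hX⟩, rfl⟩) ⟨T, hTA, hT, hTs⟩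
    · have := card_le_of_subset_confinedTo hS hSmax hXS hT hTA
      omega
    · exact not_exists_stable_subset_commonNbrsOff hfree hS hXS hX ⟨T, hTA, hT, hTs⟩
end

section
/- Suppose that for a fixed integer s ≥ 2 there is a constant c > 0 such that every graph H with α(H) < s and ω(H) ≤ w (for real w > 1) satisfies |H| < c·w^{s−1}/(log w)^{s−2}. Then for integers s ≥ t ≥ 2, every K_{s,t}-free graph G with ω(G) ≤ w (w > 1 real, c ≥ s) satisfies |G| ≤ c·α(G)^t·w^{s−1}/(log w)^{s−2}. -/
/-!
Fix a maximum stable set `S`, `|S| = α`, and send each vertex `v ∉ S` to a subset `f v` of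
`N(v) ∩ S` of size `min t |N(v) ∩ S|`; it is nonempty by maximality of `S`. A fibre of `f` over a
`t`-set contains no stable `s`-set because `G` is `K_{s,t}`-free. A fibre over a smaller set `F`
consists of vertices whose neighbourhood in `S` is exactly `F`, so for a stable set `T` in it
`T ∪ (S \ F)` is stable and `|T| ≤ |F| < t ≤ s`. Hence each fibre has fewer than
`B = c w^{s-1} / (log w)^{s-2}` vertices, and there are at most `∑_{k=1}^t C(α, k)` fibres, so
`|G| ≤ α + ∑_{k=1}^t C(α, k) B ≤ α^t B` once `α ≠ 1`, using `B ≥ c ≥ 2` (as `log₂ w ≤ w`).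
If `α = 1`, the hypothesis applies to `G` itself.
-/

open SimpleGraph Finset

lemma Finset.card_le_sum_choose {α : Type*} [DecidableEq α] {S : Finset α} {t : ℕ}
    {𝒜 : Finset (Finset α)} (h𝒜 : ∀ F ∈ 𝒜, F ⊆ S ∧ F.card ∈ Icc 1 t) :
    𝒜.card ≤ ∑ k ∈ Icc 1 t, S.card.choose k := calc
  𝒜.card ≤ ((Icc 1 t).biUnion (S.powersetCard ·)).card := by
    refine card_le_card fun F hF => mem_biUnion.2 ⟨F.card, (h𝒜 F hF).2, ?_⟩
    exact mem_powersetCard.2 ⟨(h𝒜 F hF).1, rfl⟩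
  _ ≤ ∑ k ∈ Icc 1 t, (S.powersetCard k).card := card_biUnion_le
  _ = ∑ k ∈ Icc 1 t, S.card.choose k := by simp only [card_powersetCard]

lemma Nat.two_mul_choose_le_pow (a : ℕ) {k : ℕ} (hk : 2 ≤ k) : 2 * a.choose k ≤ a ^ k := calc
  2 * a.choose k ≤ k.factorial * a.choose k := by
    gcongr
    exact (Nat.self_le_factorial k).trans' hk
  _ = a.descFactorial k := (Nat.descFactorial_eq_factorial_mul_choose a k).symm
  _ ≤ a ^ k := a.descFactorial_le_pow k

lemma Nat.add_two_mul_sum_choose_le {a t : ℕ} (ha : a ≠ 1) (ht : 2 ≤ t) :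
    a + 2 * ∑ k ∈ Icc 1 t, a.choose k ≤ 2 * a ^ t := by
  obtain rfl | ha := (Nat.eq_zero_or_pos a).imp_right (Nat.lt_of_le_of_ne · ha.symm)
  · rw [sum_eq_zero fun k hk => Nat.choose_eq_zero_of_lt (mem_Icc.1 hk).1]
    simp
  induction t, ht using Nat.le_induction with
  | base =>
    obtain ⟨b, rfl⟩ : ∃ b, a = b + 2 := ⟨a - 2, by omega⟩
    have h2 : 2 * (b + 2).choose 2 = (b + 2) * (b + 1) := by
      rw [Nat.choose_two_right, Nat.add_succ_sub_one]
      exact Nat.mul_div_cancel' (Nat.even_mul_pred_self (b + 2)).two_dvd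
    rw [sum_Icc_succ_top one_le_two, Icc_self, sum_singleton, Nat.choose_one_right]
    nlinarith
  | succ n hn ih =>
    have h2 := Nat.two_mul_choose_le_pow a (k := n + 1) (by omega)
    have h3 := Nat.mul_le_mul_left (a ^ n) ha
    rw [sum_Icc_succ_top (by omega), pow_succ] at *
    omega

lemma Real.logb_le_self {b w : ℝ} (hb : 2 ≤ b) (hw : 1 ≤ w) : Real.logb b w ≤ w := by
  rw [Real.logb_le_iff_le_rpow (by linarith) (by linarith)]
  calc w ≤ 1 + w * 1 := by linarith
    _ ≤ (1 + 1) ^ w := one_add_mul_self_le_rpow_one_add (by norm_num) hw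
    _ ≤ b ^ w := Real.rpow_le_rpow (by norm_num) (by linarith) (by linarith)

lemma le_mul_pow_div_pow {c L w : ℝ} {m n : ℕ} (hc : 0 ≤ c) (hL : 0 < L) (hLw : L ≤ w)
    (hw : 1 ≤ w) (hnm : n ≤ m) : c ≤ c * w ^ m / L ^ n := by
  rw [mul_div_assoc]
  refine le_mul_of_one_le_right hc ((one_le_div (pow_pos hL n)).2 ?_)
  calc L ^ n ≤ w ^ n := pow_le_pow_left₀ hL.le hLw n
    _ ≤ w ^ m := pow_le_pow_right₀ hw hnm

section StableSet

variable {V : Type*} {G : SimpleGraph V}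

namespace IsStableSet

lemma mono_s6 {S T : Finset V} (hS : IsStableSet G S) (hTS : T ⊆ S) : IsStableSet G T :=
  fun _ hu _ hv => hS (hTS hu) (hTS hv)

lemma union_s6 [DecidableEq V] {S T : Finset V} (hS : IsStableSet G S) (hT : IsStableSet G T)
    (h : ∀ u ∈ S, ∀ v ∈ T, ¬G.Adj u v) : IsStableSet G (S ∪ T) := by
  intro u hu v hv huv hadj
  rcases mem_union.1 hu with hu | hu <;> rcases mem_union.1 hv with hv | hv
  · exact hS hu hv huv hadj
  · exact h u hu v hv hadj
  · exact h v hv u hu hadj.symm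
  · exact hT hu hv huv hadj

lemma singleton (v : V) : IsStableSet G {v} := fun _ hx _ hy hxy =>
  (hxy ((mem_singleton.1 hx).trans (mem_singleton.1 hy).symm)).elim

lemma map {W : Type*} {H : SimpleGraph W} (φ : H ↪g G) {T : Finset W}
    (hT : IsStableSet H T) : IsStableSet G (T.map φ.toEmbedding) := by
  simp only [IsStableSet, mem_map]
  rintro _ ⟨x, hx, rfl⟩ _ ⟨y, hy, rfl⟩ hxy hadj
  exact hT hx hy (fun h => hxy (h ▸ rfl)) (φ.map_adj_iff.1 hadj)

lemma card_le_of_forall_not_adj [DecidableEq V] {S T F : Finset V} (hS : IsStableSet G S)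
    (hmax : ∀ R, IsStableSet G R → R.card ≤ S.card) (hT : IsStableSet G T)
    (hTS : Disjoint T S) (hFS : F ⊆ S) (h : ∀ v ∈ T, ∀ b ∈ S \ F, ¬G.Adj v b) :
    T.card ≤ F.card := by
  have hle := hmax _ (hT.union_s6 (hS.mono_s6 sdiff_subset) h)
  rw [card_union_of_disjoint (hTS.mono_right sdiff_subset), card_sdiff_of_subset hFS] at hle
  have := card_le_card hFS
  omega

end IsStableSet

lemma KstFree.card_lt {s t : ℕ} (h : KstFree G s t) {A B : Finset V} (hAB : Disjoint A B)
    (hA : IsStableSet G A) (hB : IsStableSet G B) (hBt : B.card = t)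
    (hadj : ∀ a ∈ A, ∀ b ∈ B, G.Adj a b) : A.card < s := by
  by_contra! hsA
  obtain ⟨A', hA'A, hA's⟩ := exists_subset_card_eq hsA
  exact h ⟨A', B, hAB.mono_left hA'A, hA's, hBt, hA.mono_s6 hA'A, hB,
    fun a ha => hadj a (hA'A ha)⟩

section MaximumStableSet

variable [DecidableEq V] [DecidableRel G.Adj] {s t : ℕ} {S : Finset V}

lemma filter_adj_nonempty_of_notMem (hS : IsStableSet G S)
    (hmax : ∀ R, IsStableSet G R → R.card ≤ S.card) {v : V} (hv : v ∉ S) :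
    (S.filter (G.Adj v)).Nonempty := by
  by_contra h
  rw [not_nonempty_iff_eq_empty, filter_eq_empty_iff] at h
  have := hS.card_le_of_forall_not_adj hmax (IsStableSet.singleton v)
    (disjoint_singleton_left.2 hv) (empty_subset S) fun u hu b hb => by
      rw [mem_singleton.1 hu]
      exact h (mem_sdiff.1 hb).1
  simp at this

lemma KstFree.card_lt_of_forall_eq (hfree : KstFree G s t) (hts : t ≤ s) (hS : IsStableSet G S)
    (hmax : ∀ R, IsStableSet G R → R.card ≤ S.card) {f : V → Finset V}
    (hf : ∀ v, f v ⊆ S.filter (G.Adj v))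
    (hfcard : ∀ v, (f v).card = min t (S.filter (G.Adj v)).card)
    {T : Finset V} (hT : IsStableSet G T) (hTS : Disjoint T S) (v₀ : V)
    (hTf : ∀ v ∈ T, f v = f v₀) : T.card < s := by
  have hfS : f v₀ ⊆ S := (hf v₀).trans (filter_subset _ _)
  rcases (hfcard v₀ ▸ min_le_left _ _ : (f v₀).card ≤ t).eq_or_lt with heq | hlt
  · refine hfree.card_lt (hTS.mono_right hfS) hT (hS.mono_s6 hfS) heq fun v hv b hb => ?_
    rw [← hTf v hv] at hb
    exact (mem_filter.1 (hf v hb)).2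
  · have htrace : ∀ v ∈ T, S.filter (G.Adj v) = f v₀ := fun v hv => by
      rw [← hTf v hv]
      refine (eq_of_subset_of_card_le (hf v) ?_).symm
      have hlt' : (f v).card < t := hTf v hv ▸ hlt
      have := hfcard v
      omega
    calc T.card ≤ (f v₀).card := hS.card_le_of_forall_not_adj hmax hT hTS hfS
          fun v hv b hb hadj => (mem_sdiff.1 hb).2 <|
            htrace v hv ▸ mem_filter.2 ⟨(mem_sdiff.1 hb).1, hadj⟩
      _ < s := hlt.trans_le hts

theorem KstFree.card_le_add_sum_choose_mul [Fintype V] (hfree : KstFree G s t) (ht : 0 < t)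
    (hts : t ≤ s) (hS : IsStableSet G S) (hmax : ∀ R, IsStableSet G R → R.card ≤ S.card)
    {B : ℝ} (hB : ∀ D : Finset V, (∀ T ⊆ D, IsStableSet G T → T.card < s) → (D.card : ℝ) ≤ B) :
    (Fintype.card V : ℝ) ≤ S.card + ((∑ k ∈ Icc 1 t, S.card.choose k : ℕ) : ℝ) * B := by
  choose f hf hfcard using fun v => exists_subset_card_eq (min_le_right t (S.filter (G.Adj v)).card)
  have hfib : ∀ F ∈ Sᶜ.image f, ((Sᶜ.filter (f · = F)).card : ℝ) ≤ B := by
    intro F hF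
    obtain ⟨v₀, -, rfl⟩ := mem_image.1 hF
    refine hB _ fun T hTsub hT => hfree.card_lt_of_forall_eq hts hS hmax hf hfcard hT ?_ v₀
      fun v hv => (mem_filter.1 (hTsub hv)).2
    exact disjoint_left.2 fun v hv => mem_compl.1 (mem_filter.1 (hTsub hv)).1
  have himage : (Sᶜ.image f).card ≤ ∑ k ∈ Icc 1 t, S.card.choose k := by
    refine card_le_sum_choose fun F hF => ?_
    obtain ⟨v, hv, rfl⟩ := mem_image.1 hF
    refine ⟨(hf v).trans (filter_subset _ _), mem_Icc.2 ⟨?_, (hfcard v).trans_le (min_le_left _ _)⟩⟩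
    rw [hfcard v]
    exact le_min ht (filter_adj_nonempty_of_notMem hS hmax (mem_compl.1 hv)).card_pos
  have hB0 : 0 ≤ B := by
    simpa using hB ∅ fun T hT _ => by rw [subset_empty.1 hT]; exact ht.trans_le hts
  calc (Fintype.card V : ℝ)
      = S.card + ∑ F ∈ Sᶜ.image f, ((Sᶜ.filter (f · = F)).card : ℝ) := by
        rw [← card_add_card_compl S, card_eq_sum_card_image f Sᶜ]
        push_cast
        rfl
    _ ≤ S.card + ∑ F ∈ Sᶜ.image f, B := by gcongr with F hF; exact hfib F hF
    _ = S.card + (Sᶜ.image f).card * B := by rw [sum_const, nsmul_eq_mul]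
    _ ≤ S.card + ((∑ k ∈ Icc 1 t, S.card.choose k : ℕ) : ℝ) * B := by gcongr

end MaximumStableSet

end StableSet

lemma card_lt_of_forall_isStableSet_card_lt {s : ℕ} {w B : ℝ}
    (hyp : ∀ (W : Type) [Fintype W] (H : SimpleGraph W),
      (∀ T : Finset W, IsStableSet H T → T.card < s) →
      (∀ K : Finset W, H.IsClique (K : Set W) → (K.card : ℝ) ≤ w) →
      (Fintype.card W : ℝ) < B)
    {V : Type} {G : SimpleGraph V}
    (hω : ∀ K : Finset V, G.IsClique (K : Set V) → (K.card : ℝ) ≤ w)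
    (D : Finset V) (hD : ∀ T ⊆ D, IsStableSet G T → T.card < s) : (D.card : ℝ) < B := by
  let φ := Embedding.induce (G := G) (D : Set V)
  have hcard := hyp _ (G.induce (D : Set V)) (fun T hT => ?_) (fun K hK => ?_)
  · simpa using hcard
  · rw [← card_map φ.toEmbedding]
    refine hD _ (fun v hv => ?_) (hT.map φ)
    obtain ⟨x, -, rfl⟩ := mem_map.1 hv
    exact x.2
  · rw [← card_map φ.toEmbedding]
    refine hω _ fun x hx y hy hxy => ?_
    simp only [coe_map, Set.mem_image, mem_coe] at hx hy
    obtain ⟨x, hx, rfl⟩ := hx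
    obtain ⟨y, hy, rfl⟩ := hy
    exact φ.map_adj_iff.2 (hK hx hy fun h => hxy (h ▸ rfl))

/-- If `c ≥ s` satisfies the bound `|H| < c·w^{s-1}/(log w)^{s-2}` for every graph `H`
with `α(H) < s` and `ω(H) ≤ w`, then every `K_{s,t}`-free graph `G` (for `s ≥ t ≥ 2`)
with `ω(G) ≤ w` satisfies `|G| ≤ c·α(G)^t·w^{s-1}/(log w)^{s-2}`. -/
theorem stmt_6 (s t : ℕ) (hts : t ≤ s) (ht : 2 ≤ t) (c : ℝ) (hcs : (s : ℝ) ≤ c)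
    (hyp : ∀ (W : Type) [Fintype W] (H : SimpleGraph W) (w : ℝ), 1 < w →
      (∀ T : Finset W, IsStableSet H T → T.card < s) →
      (∀ K : Finset W, H.IsClique (K : Set W) → (K.card : ℝ) ≤ w) →
      (Fintype.card W : ℝ) < c * w ^ (s - 1) / (Real.logb 2 w) ^ (s - 2))
    (V : Type) [Fintype V] (G : SimpleGraph V) (hfree : KstFree G s t)
    (w : ℝ) (hw : 1 < w)
    (hω : ∀ K : Finset V, G.IsClique (K : Set V) → (K.card : ℝ) ≤ w)
    (a : ℕ) (ha : ∃ S : Finset V, IsStableSet G S ∧ S.card = a)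
    (hamax : ∀ T : Finset V, IsStableSet G T → T.card ≤ a) :
    (Fintype.card V : ℝ) ≤ c * a ^ t * w ^ (s - 1) / (Real.logb 2 w) ^ (s - 2) := by
  classical
  obtain ⟨S, hS, rfl⟩ := ha
  set B := c * w ^ (s - 1) / Real.logb 2 w ^ (s - 2) with hBdef
  have hs : 2 ≤ s := ht.trans hts
  have hc : (2 : ℝ) ≤ c := (Nat.ofNat_le_cast.2 hs).trans hcs
  have hB : 2 ≤ B := hc.trans <| le_mul_pow_div_pow (by linarith) (Real.logb_pos one_lt_two hw)
    (Real.logb_le_self le_rfl hw.le) hw.le (by omega)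
  have hsmall (D : Finset V) (hD : ∀ T ⊆ D, IsStableSet G T → T.card < s) : (D.card : ℝ) < B :=
    card_lt_of_forall_isStableSet_card_lt (fun W _ H => hyp W H w hw) hω D hD
  suffices (Fintype.card V : ℝ) ≤ S.card ^ t * B from this.trans_eq (by rw [hBdef]; ring)
  rcases eq_or_ne S.card 1 with h1 | h1
  · rw [h1, Nat.cast_one, one_pow, one_mul, ← card_univ]
    exact (hsmall univ fun T _ hT => by have := hamax T hT; omega).le
  · have hcount : (S.card : ℝ) + 2 * (∑ k ∈ Icc 1 t, S.card.choose k : ℕ) ≤ 2 * S.card ^ t := by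
      exact_mod_cast Nat.add_two_mul_sum_choose_le h1 ht
    have := hfree.card_le_add_sum_choose_mul (by omega) hts hS hamax fun D hD => (hsmall D hD).le
    nlinarith
end

section
/- Suppose for integer s ≥ 2 there is d > 0 such that every graph H with α(H) < s and ω(H) ≤ w (real w > 1) has |H| < d·w^{s−1}/(log w)^{s−2}. Then there exists c > 0 such that every graph G with α(G) < s and |G| ≥ 2 satisfies |G| < c·ω(G)^{s−1}/(log |G|)^{s−2}. -/
open SimpleGraph Finset

/-- Suppose `d > 0` is such that every graph `H` with `α(H) < s` and `ω(H) ≤ w`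
(for real `w > 1`) satisfies `|H| < d·w^{s-1}/(log w)^{s-2}`. Then there exists `c > 0`
such that every graph `G` with `α(G) < s` and `|G| ≥ 2` satisfies
`|G| < c·ω(G)^{s-1}/(log |G|)^{s-2}`. -/
theorem stmt_8 (s : ℕ) (hs : 2 ≤ s) (d : ℝ) (hd : 0 < d)
    (hyp : ∀ (W : Type) [Fintype W] (H : SimpleGraph W) (w : ℝ), 1 < w →
      (∀ T : Finset W, IsStableSet H T → T.card < s) →
      (∀ K : Finset W, H.IsClique (K : Set W) → (K.card : ℝ) ≤ w) →
      (Fintype.card W : ℝ) < d * w ^ (s - 1) / (Real.logb 2 w) ^ (s - 2)) :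
    ∃ c : ℝ, 0 < c ∧ ∀ (V : Type) [Fintype V] (G : SimpleGraph V),
      (∀ T : Finset V, IsStableSet G T → T.card < s) →
      2 ≤ Fintype.card V →
      ∀ om : ℕ, (∃ K : Finset V, G.IsClique (K : Set V) ∧ K.card = om) →
        (∀ K : Finset V, G.IsClique (K : Set V) → K.card ≤ om) →
        (Fintype.card V : ℝ) <
          c * (om : ℝ) ^ (s - 1) / (Real.logb 2 (Fintype.card V)) ^ (s - 2) := by
  set A : ℝ := max (Real.logb 2 d) 0 + ((s - 1 : ℕ) : ℝ) with hAdef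
  have hs1 : (1 : ℝ) ≤ ((s - 1 : ℕ) : ℝ) := by
    have : 1 ≤ s - 1 := by omega
    exact_mod_cast this
  have hA1 : 1 ≤ A := by
    have := le_max_right (Real.logb 2 d) 0
    simp only [hAdef]; linarith
  have hA0 : 0 < A := lt_of_lt_of_le one_pos hA1
  have hls1 : (1 : ℝ) ≤ Real.logb 2 s := by
    calc (1:ℝ) = Real.logb 2 2 := (Real.logb_self_eq_one (by norm_num)).symm
    _ ≤ Real.logb 2 s := Real.logb_le_logb_of_le (by norm_num) (by norm_num)
        (by exact_mod_cast hs)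
  refine ⟨d * A ^ (s - 2) + s * (Real.logb 2 s) ^ (s - 2) + 1, ?_, ?_⟩
  · have h1 : 0 < d * A ^ (s - 2) := by positivity
    have h2 : (0:ℝ) ≤ s * (Real.logb 2 s) ^ (s - 2) := by
      have : (0:ℝ) ≤ (Real.logb 2 s) ^ (s-2) := by positivity
      have hs0 : (0:ℝ) ≤ s := by positivity
      exact mul_nonneg hs0 this
    linarith
  intro V _ G hstab hcard om hK hmax
  classical
  obtain ⟨K0, hK0c, hK0card⟩ := hK
  set n := Fintype.card V with hn
  have hn2 : (2 : ℝ) ≤ n := by exact_mod_cast hcard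
  have hLn1 : (1 : ℝ) ≤ Real.logb 2 n := by
    calc (1:ℝ) = Real.logb 2 2 := (Real.logb_self_eq_one (by norm_num)).symm
    _ ≤ Real.logb 2 n := Real.logb_le_logb_of_le (by norm_num) (by norm_num) hn2
  have hLn0 : (0:ℝ) ≤ Real.logb 2 n := by linarith
  have hLnpow : (0:ℝ) < (Real.logb 2 n) ^ (s - 2) := by positivity
  rw [div_eq_mul_inv, ← div_eq_mul_inv, lt_div_iff₀ hLnpow]
  -- om ≥ 1
  have hom1 : 1 ≤ om := by
    have hpos : 0 < Fintype.card V := by omega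
    obtain ⟨v⟩ := Fintype.card_pos_iff.mp hpos
    have hcl : G.IsClique (({v} : Finset V) : Set V) := by
      simp [SimpleGraph.IsClique, Set.pairwise_singleton]
    have := hmax {v} hcl
    simpa using this
  rcases Nat.lt_or_ge om 2 with hom | hom
  · -- om = 1, graph has no edges
    have homeq : om = 1 := by omega
    subst homeq
    have hstable : IsStableSet G Finset.univ := by
      intro u _ v _ huv hadj
      have hcl : G.IsClique (({u, v} : Finset V) : Set V) := by
        rw [Finset.coe_insert, Finset.coe_singleton]
        exact SimpleGraph.isClique_pair.mpr (fun _ => hadj)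
      have := hmax {u, v} hcl
      rw [Finset.card_pair huv] at this
      omega
    have hns : n < s := by
      have := hstab Finset.univ hstable
      simpa [hn] using this
    have hnsR : (n : ℝ) ≤ (s : ℝ) := by exact_mod_cast hns.le
    have hLns : Real.logb 2 n ≤ Real.logb 2 s :=
      Real.logb_le_logb_of_le (by norm_num) (by linarith) hnsR
    have hpow : (Real.logb 2 n) ^ (s - 2) ≤ (Real.logb 2 s) ^ (s - 2) :=
      pow_le_pow_left₀ hLn0 hLns _
    have key : (n : ℝ) * (Real.logb 2 n) ^ (s - 2) ≤ s * (Real.logb 2 s) ^ (s - 2) := by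
      have h1 : (n:ℝ) * (Real.logb 2 n) ^ (s-2) ≤ (n:ℝ) * (Real.logb 2 s) ^ (s-2) :=
        mul_le_mul_of_nonneg_left hpow (by linarith)
      have h2 : (n:ℝ) * (Real.logb 2 s) ^ (s-2) ≤ (s:ℝ) * (Real.logb 2 s) ^ (s-2) :=
        mul_le_mul_of_nonneg_right hnsR (by positivity)
      linarith
    have hdA : (0:ℝ) ≤ d * A ^ (s - 2) := by positivity
    push_cast
    rw [one_pow]
    linarith [key]
  · -- om ≥ 2
    have homR : (1 : ℝ) < (om : ℝ) := by exact_mod_cast hom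
    have hcliq : ∀ K : Finset V, G.IsClique (K : Set V) → ((K.card : ℝ)) ≤ (om : ℝ) := by
      intro K hK
      exact_mod_cast hmax K hK
    have hmain := hyp V G (om : ℝ) homR hstab hcliq
    set L : ℝ := Real.logb 2 (om : ℝ) with hLdef
    have hL1 : (1:ℝ) ≤ L := by
      calc (1:ℝ) = Real.logb 2 2 := (Real.logb_self_eq_one (by norm_num)).symm
      _ ≤ L := Real.logb_le_logb_of_le (by norm_num) (by norm_num)
          (by exact_mod_cast hom)
    have hLpow : (0:ℝ) < L ^ (s - 2) := by positivity
    rw [lt_div_iff₀ hLpow] at hmain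
    -- hmain : n * L^(s-2) < d * om^(s-1)
    have hompow : (0:ℝ) < (om : ℝ) ^ (s - 1) := by positivity
    have hnle : (n : ℝ) ≤ d * (om : ℝ) ^ (s - 1) := by
      have hLp1 : (1:ℝ) ≤ L ^ (s-2) := one_le_pow₀ hL1
      have h1 : (n:ℝ) * 1 ≤ (n:ℝ) * L ^ (s-2) :=
        mul_le_mul_of_nonneg_left hLp1 (by linarith)
      rw [mul_one] at h1
      linarith
    -- log n ≤ logb 2 d + (s-1) * L
    have hlogsplit : Real.logb 2 (d * (om : ℝ) ^ (s - 1)) =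
        Real.logb 2 d + ((s-1 : ℕ) : ℝ) * L := by
      rw [Real.logb_mul (ne_of_gt hd) (ne_of_gt hompow), Real.logb_pow]
    have hLnle : Real.logb 2 n ≤ Real.logb 2 d + ((s-1:ℕ):ℝ) * L := by
      rw [← hlogsplit]
      exact Real.logb_le_logb_of_le (by norm_num) (by linarith) hnle
    have hLnAL : Real.logb 2 n ≤ A * L := by
      have hmx0 : (0:ℝ) ≤ max (Real.logb 2 d) 0 := le_max_right _ _
      have hmx : Real.logb 2 d ≤ max (Real.logb 2 d) 0 := le_max_left _ _
      have : max (Real.logb 2 d) 0 ≤ max (Real.logb 2 d) 0 * L := by nlinarith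
      simp only [hAdef]; nlinarith
    have hpow2 : (Real.logb 2 n) ^ (s-2) ≤ A ^ (s-2) * L ^ (s-2) := by
      calc (Real.logb 2 n) ^ (s-2) ≤ (A * L) ^ (s-2) := pow_le_pow_left₀ hLn0 hLnAL _
      _ = A ^ (s-2) * L ^ (s-2) := mul_pow A L (s-2)
    have hApow : (0:ℝ) < A ^ (s-2) := by positivity
    have hlsn : (0:ℝ) ≤ (s:ℝ) * (Real.logb 2 s) ^ (s-2) := by positivity
    calc (n : ℝ) * (Real.logb 2 n) ^ (s-2)
        ≤ (n:ℝ) * (A ^ (s-2) * L ^ (s-2)) :=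
          mul_le_mul_of_nonneg_left hpow2 (by linarith)
      _ = ((n:ℝ) * L ^ (s-2)) * A ^ (s-2) := by ring
      _ < (d * (om:ℝ) ^ (s-1)) * A ^ (s-2) := mul_lt_mul_of_pos_right hmain hApow
      _ = (d * A ^ (s-2)) * (om:ℝ) ^ (s-1) := by ring
      _ ≤ (d * A ^ (s-2) + s * (Real.logb 2 s) ^ (s-2) + 1) * (om:ℝ) ^ (s-1) := by
          apply mul_le_mul_of_nonneg_right _ (le_of_lt hompow)
          linarith
end

section
/- For every integer s ≥ 3, if every graph H with α(H) < s and |H| ≥ 2 has its vertex set expressible as a union of at most c·(|H|/log|H|)^{(s−2)/(s−1)} cliques, then every K_{s,1}-free graph G with |G| ≥ 2 admits a clique cover of size at most c·|G|^{2−1/(s−1)}/(log|G|)^{(s−2)/(s−1)}. -/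
open SimpleGraph Finset

/-!
Fix a vertex `v` and let `H_v` be the graph on `V(G)` that agrees with `G` inside the
neighbourhood `N(v)` and makes every vertex outside `N(v)` adjacent to everything. A stable set
of `H_v` either is a single vertex or is a stable set of `G` inside `N(v)`; the latter has fewer
than `s` vertices because `G` has no induced `K_{s,1}` centred at `v`. So `α(H_v) < s`, and the
hypothesis covers `V` by at most `c (n / log n)^{(s-2)/(s-1)}` cliques of `H_v`. Intersecting them
with `N(v)` and adding `v` gives cliques of `G` covering every edge at `v`. Taking the union over
all `n` vertices multiplies the bound by `n`.
-/

variable {V : Type*}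

lemma IsStableSet.of_le {G H : SimpleGraph V} {T : Finset V} (hGH : G ≤ H)
    (hT : IsStableSet H T) : IsStableSet G T :=
  fun _ hu _ hw huw hadj => hT hu hw huw (hGH hadj)

lemma KstFree.card_lt_of_isStableSet_of_forall_adj {G : SimpleGraph V} {s : ℕ}
    (hfree : KstFree G s 1) {v : V} {T : Finset V} (hT : IsStableSet G T)
    (hTv : ∀ u ∈ T, G.Adj v u) : T.card < s := by
  by_contra! hcard
  obtain ⟨A, hAT, hAcard⟩ := exists_subset_card_eq hcard
  refine hfree ⟨A, {v}, ?_, hAcard, card_singleton v, fun _ ha _ hb => hT (hAT ha) (hAT hb),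
    ?_, ?_⟩
  · exact disjoint_singleton_right.2 fun hv => G.irrefl (hTv v (hAT hv))
  · intro u hu w hw huw
    simp only [mem_singleton] at hu hw
    exact absurd (hu.trans hw.symm) huw
  · intro a ha b hb
    rw [mem_singleton.1 hb]
    exact (hTv a (hAT ha)).symm

namespace SimpleGraph

variable (G : SimpleGraph V) (v : V)

/-- The graph `H_v` above. -/
def completeOffNeighborSet : SimpleGraph V :=
  fromRel fun u w => G.Adj u w ∨ ¬G.Adj v u

variable {G v}

lemma le_completeOffNeighborSet : G ≤ G.completeOffNeighborSet v :=
  fun _ _ h => ⟨h.ne, Or.inl (Or.inl h)⟩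

lemma completeOffNeighborSet_adj_of_not_adj {u w : V} (hvu : ¬G.Adj v u) (huw : u ≠ w) :
    (G.completeOffNeighborSet v).Adj u w :=
  ⟨huw, Or.inl (Or.inr hvu)⟩

lemma adj_of_completeOffNeighborSet_adj {u w : V} (h : (G.completeOffNeighborSet v).Adj u w)
    (hvu : G.Adj v u) (hvw : G.Adj v w) : G.Adj u w := by
  obtain ⟨-, (huw | hnu) | (hwu | hnw)⟩ := h
  · exact huw
  · exact absurd hvu hnu
  · exact hwu.symm
  · exact absurd hvw hnw

lemma card_lt_of_isStableSet_completeOffNeighborSet {s : ℕ} (hfree : KstFree G s 1)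
    (hs : 2 ≤ s) {T : Finset V} (hT : IsStableSet (G.completeOffNeighborSet v) T) :
    T.card < s := by
  by_cases hTv : ∀ u ∈ T, G.Adj v u
  · exact hfree.card_lt_of_isStableSet_of_forall_adj (hT.of_le le_completeOffNeighborSet) hTv
  · obtain ⟨u, huT, hvu⟩ := not_forall₂.1 hTv
    have hTu : T ⊆ {u} := fun w hw => mem_singleton.2 <| by
      by_contra hwu
      exact hT huT hw (Ne.symm hwu) (completeOffNeighborSet_adj_of_not_adj hvu (Ne.symm hwu))
    have := card_le_card hTu
    rw [card_singleton] at this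
    omega

lemma isClique_insert_filter_adj_s11 [DecidableEq V] [DecidableRel G.Adj] {A : Finset V}
    (hA : (G.completeOffNeighborSet v).IsClique (A : Set V)) :
    G.IsClique ((insert v (A.filter (G.Adj v)) : Finset V) : Set V) := by
  intro a ha b hb hab
  simp only [coe_insert, Set.mem_insert_iff, mem_coe, mem_filter] at ha hb
  rcases ha with rfl | ⟨haA, hva⟩ <;> rcases hb with rfl | ⟨hbA, hvb⟩
  · exact absurd rfl hab
  · exact hvb
  · exact hva.symm
  · exact adj_of_completeOffNeighborSet_adj (hA haA hbA hab) hva hvb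

lemma exists_cliques_cover_adj_of_cover_completeOffNeighborSet {F : Finset (Finset V)}
    (hF : ∀ A ∈ F, (G.completeOffNeighborSet v).IsClique (A : Set V))
    (hcover : ∀ w, ∃ A ∈ F, w ∈ A) :
    ∃ C : Finset (Finset V), (∀ X ∈ C, G.IsClique (X : Set V)) ∧
      (∀ u, G.Adj v u → ∃ X ∈ C, v ∈ X ∧ u ∈ X) ∧ C.card ≤ F.card := by
  classical
  refine ⟨F.image fun A => insert v (A.filter (G.Adj v)), ?_, ?_, card_image_le⟩
  · simp only [mem_image, forall_exists_index, and_imp]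
    rintro _ A hA rfl
    exact isClique_insert_filter_adj_s11 (hF A hA)
  · intro u hvu
    obtain ⟨A, hA, huA⟩ := hcover u
    exact ⟨_, mem_image_of_mem _ hA, mem_insert_self _ _,
      mem_insert_of_mem (mem_filter.2 ⟨huA, hvu⟩)⟩

lemma isCliqueCover_biUnion [Fintype V] [DecidableEq V] {C : V → Finset (Finset V)}
    (hclique : ∀ v, ∀ X ∈ C v, G.IsClique (X : Set V))
    (hcover : ∀ v u, G.Adj v u → ∃ X ∈ C v, v ∈ X ∧ u ∈ X) :
    IsCliqueCover G (univ.biUnion C) := by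
  refine ⟨fun X hX => ?_, fun u w huw => ?_⟩
  · obtain ⟨v, -, hX⟩ := mem_biUnion.1 hX
    exact hclique v X hX
  · obtain ⟨X, hX, hwX, huX⟩ := hcover w u huw.symm
    exact ⟨X, mem_biUnion.2 ⟨w, mem_univ w, hX⟩, huX, hwX⟩

end SimpleGraph

lemma Real.mul_mul_div_rpow_eq (c : ℝ) {n L β : ℝ} (hn : 0 < n) (hL : 0 < L) :
    n * (c * (n / L) ^ β) = c * n ^ (1 + β) / L ^ β := by
  rw [Real.rpow_add hn, Real.rpow_one, Real.div_rpow hn.le hL.le]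
  have : L ^ β ≠ 0 := (Real.rpow_pos_of_pos hL β).ne'
  field_simp

/-- For `s ≥ 3`: if every graph `H` with `α(H) < s` and `|H| ≥ 2` has its vertex set
expressible as a union of at most `c·(|H|/log|H|)^{(s-2)/(s-1)}` cliques, then every
`K_{s,1}`-free graph `G` with `|G| ≥ 2` admits a clique cover of size at most
`c·|G|^{2-1/(s-1)}/(log|G|)^{(s-2)/(s-1)}`. -/
theorem stmt_11 (s : ℕ) (hs : 3 ≤ s) (c : ℝ)
    (hyp : ∀ (W : Type) [Fintype W] (H : SimpleGraph W),
      (∀ T : Finset W, IsStableSet H T → T.card < s) →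
      2 ≤ Fintype.card W →
      ∃ F : Finset (Finset W),
        (∀ A ∈ F, H.IsClique (A : Set W)) ∧
        (∀ w : W, ∃ A ∈ F, w ∈ A) ∧
        (F.card : ℝ) ≤ c * ((Fintype.card W : ℝ) / Real.logb 2 (Fintype.card W))
          ^ ((s - 2 : ℝ) / (s - 1 : ℝ)))
    (V : Type) [Fintype V] (G : SimpleGraph V)
    (hfree : KstFree G s 1) (hV : 2 ≤ Fintype.card V) :
    ∃ C : Finset (Finset V), IsCliqueCover G C ∧
      (C.card : ℝ) ≤ c * (Fintype.card V : ℝ) ^ ((2 : ℝ) - 1 / (s - 1 : ℝ)) /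
        (Real.logb 2 (Fintype.card V)) ^ ((s - 2 : ℝ) / (s - 1 : ℝ)) := by
  classical
  set n : ℕ := Fintype.card V
  set β : ℝ := ((s : ℝ) - 2) / ((s : ℝ) - 1) with hβ
  have hn : (2 : ℝ) ≤ n := by exact_mod_cast hV
  have hstar : ∀ v, ∃ C : Finset (Finset V), (∀ X ∈ C, G.IsClique (X : Set V)) ∧
      (∀ u, G.Adj v u → ∃ X ∈ C, v ∈ X ∧ u ∈ X) ∧
      (C.card : ℝ) ≤ c * ((n : ℝ) / Real.logb 2 n) ^ β := by
    intro v
    obtain ⟨F, hF, hFcover, hFcard⟩ := hyp V (G.completeOffNeighborSet v)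
      (fun T => card_lt_of_isStableSet_completeOffNeighborSet hfree (by omega)) hV
    obtain ⟨C, hC, hCcover, hCcard⟩ :=
      exists_cliques_cover_adj_of_cover_completeOffNeighborSet hF hFcover
    exact ⟨C, hC, hCcover, (Nat.cast_le.2 hCcard).trans hFcard⟩
  choose C hclique hcover hcard using hstar
  have hexp : (2 : ℝ) - 1 / ((s : ℝ) - 1) = 1 + β := by
    have : (s : ℝ) - 1 ≠ 0 := by
      have : (3 : ℝ) ≤ s := by exact_mod_cast hs
      linarith
    rw [hβ]
    field_simp
    ring
  refine ⟨univ.biUnion C, isCliqueCover_biUnion hclique hcover, ?_⟩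
  calc ((univ.biUnion C).card : ℝ) ≤ ∑ v, ((C v).card : ℝ) := by exact_mod_cast card_biUnion_le
    _ ≤ ∑ _v : V, c * ((n : ℝ) / Real.logb 2 n) ^ β := sum_le_sum fun v _ => hcard v
    _ = n * (c * ((n : ℝ) / Real.logb 2 n) ^ β) := by simp [n]
    _ = c * (n : ℝ) ^ ((2 : ℝ) - 1 / ((s : ℝ) - 1)) / Real.logb 2 n ^ β := by
      rw [hexp, Real.mul_mul_div_rpow_eq c (by linarith) (Real.logb_pos (by norm_num) (by linarith))]
end

section
/- Let G be a K_{2,2}-free graph on n vertices, let v be a vertex of minimum degree, and let D = N(v). Then for every M ⊆ D, M contains a clique of size at least |M|²/(4n). -/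
open SimpleGraph Finset

/-- In a `K_{2,2}`-free graph, the common neighbourhood of two distinct nonadjacent
vertices is a clique. -/
lemma common_nbhd_clique {V : Type*} [Fintype V] [DecidableEq V]
    (G : SimpleGraph V) [DecidableRel G.Adj] (hfree : KstFree G 2 2)
    {u w : V} (hne : u ≠ w) (hna : ¬ G.Adj u w) :
    G.IsClique ((G.neighborFinset u ∩ G.neighborFinset w : Finset V) : Set V) := by
  intro x hx y hy hxy
  rw [mem_coe, mem_inter, mem_neighborFinset, mem_neighborFinset] at hx hy
  by_contra hadj
  apply hfree
  refine ⟨{u, w}, {x, y}, ?_, Finset.card_pair hne, Finset.card_pair hxy, ?_, ?_, ?_⟩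
  · rw [Finset.disjoint_left]
    intro a ha hb
    simp only [Finset.mem_insert, Finset.mem_singleton] at ha hb
    rcases ha with rfl | rfl <;> rcases hb with rfl | rfl
    · exact G.irrefl hx.1
    · exact G.irrefl hy.1
    · exact G.irrefl hx.2
    · exact G.irrefl hy.2
  · intro a ha b hb hab
    simp only [Finset.mem_insert, Finset.mem_singleton] at ha hb
    rcases ha with rfl | rfl <;> rcases hb with rfl | rfl
    · exact absurd rfl hab
    · exact hna
    · exact fun h => hna h.symm
    · exact absurd rfl hab
  · intro a ha b hb hab
    simp only [Finset.mem_insert, Finset.mem_singleton] at ha hb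
    rcases ha with rfl | rfl <;> rcases hb with rfl | rfl
    · exact absurd rfl hab
    · exact hadj
    · exact fun h => hadj h.symm
    · exact absurd rfl hab
  · intro a ha b hb
    simp only [Finset.mem_insert, Finset.mem_singleton] at ha hb
    rcases ha with rfl | rfl <;> rcases hb with rfl | rfl
    · exact hx.1
    · exact hy.1
    · exact hx.2
    · exact hy.2

/-- If `G` is `K_{2,2}`-free on `n` vertices, `v` has minimum degree and `D = N(v)`,
then every `M ⊆ D` contains a clique of size at least `|M|²/(4n)`. -/
theorem stmt_12 {V : Type*} [Fintype V] [DecidableEq V] (G : SimpleGraph V)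
    [DecidableRel G.Adj] (hfree : KstFree G 2 2)
    (v : V) (hmin : ∀ u : V, G.degree v ≤ G.degree u)
    (M : Finset V) (hM : M ⊆ G.neighborFinset v) :
    ∃ K : Finset V, K ⊆ M ∧ G.IsClique (K : Set V) ∧
      (M.card : ℝ) ^ 2 / (4 * Fintype.card V) ≤ (K.card : ℝ) := by
  classical
  have hnpos : 0 < Fintype.card V := Fintype.card_pos_iff.mpr ⟨v⟩
  obtain ⟨K₀, hK₀mem, hK₀max⟩ :=
    Finset.exists_max_image ((M.powerset).filter
      (fun K => ∀ a ∈ K, ∀ b ∈ K, a ≠ b → G.Adj a b)) Finset.card ⟨∅, by simp⟩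
  rw [Finset.mem_filter, Finset.mem_powerset] at hK₀mem
  obtain ⟨hK₀M, hK₀adj⟩ := hK₀mem
  have hmax : ∀ K : Finset V, K ⊆ M → (∀ a ∈ K, ∀ b ∈ K, a ≠ b → G.Adj a b) →
      K.card ≤ K₀.card := fun K h1 h2 =>
    hK₀max K (by rw [Finset.mem_filter, Finset.mem_powerset]; exact ⟨h1, h2⟩)
  have key : M.card * M.card ≤ 4 * Fintype.card V * K₀.card := by
    rcases M.eq_empty_or_nonempty with hME | ⟨u0, hu0⟩
    · simp [hME]
    set n := Fintype.card V with hn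
    set m := M.card with hm
    set k := K₀.card with hk
    have hk1 : 1 ≤ k := by
      have := hmax {u0} (by simpa using hu0) (by simp)
      simpa using this
    have hkm : k ≤ m := Finset.card_le_card hK₀M
    have hmd : m ≤ G.degree v := by
      have := Finset.card_le_card hM
      rwa [card_neighborFinset_eq_degree] at this
    have hdn : G.degree v < n := G.degree_lt_card_verts v
    set D := G.neighborFinset v with hD
    set X := (Finset.univ : Finset V) \ insert v D with hXdef
    have hvD : v ∉ D := G.notMem_neighborFinset_self v
    have hXcard : X.card + (G.degree v + 1) = n := by
      have h1 := Finset.card_sdiff_add_card_eq_card (Finset.subset_univ (insert v D))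
      rwa [Finset.card_insert_of_notMem hvD, hD, card_neighborFinset_eq_degree,
        Finset.card_univ] at h1
    -- every vertex outside D ∪ {v} has clique-neighbourhood inside M
    have hXbound : ∀ x ∈ X, (G.neighborFinset x ∩ M).card ≤ k := by
      intro x hx
      rw [Finset.mem_sdiff, Finset.mem_insert] at hx
      push_neg at hx
      obtain ⟨-, hxv, hxD⟩ := hx
      have hna : ¬ G.Adj v x := by rwa [← mem_neighborFinset]
      have hclique := common_nbhd_clique G hfree (fun h => hxv (h.symm)) hna
      apply hmax
      · exact fun y hy => (Finset.mem_inter.mp hy).2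
      · intro a ha b hb hab
        rw [Finset.mem_inter] at ha hb
        have ha' : a ∈ G.neighborFinset v ∩ G.neighborFinset x :=
          Finset.mem_inter.mpr ⟨hM ha.2, ha.1⟩
        have hb' : b ∈ G.neighborFinset v ∩ G.neighborFinset x :=
          Finset.mem_inter.mpr ⟨hM hb.2, hb.1⟩
        exact hclique (Finset.mem_coe.mpr ha') (Finset.mem_coe.mpr hb') hab
    set S := M.filter (fun u => m + k < 2 * (G.neighborFinset u ∩ M).card) with hSdef
    have hSM : S ⊆ M := Finset.filter_subset _ _
    have hSadj : ∀ u ∈ S, ∀ w ∈ S, u ≠ w → G.Adj u w := by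
      intro u hu w hw huw
      by_contra hna
      rw [hSdef, Finset.mem_filter] at hu hw
      have hclique := common_nbhd_clique G hfree huw hna
      have hCsub : (G.neighborFinset u ∩ M) ∩ (G.neighborFinset w ∩ M) ⊆ M :=
        fun y hy => (Finset.mem_inter.mp (Finset.mem_inter.mp hy).1).2
      have hCadj : ∀ p ∈ (G.neighborFinset u ∩ M) ∩ (G.neighborFinset w ∩ M),
          ∀ q ∈ (G.neighborFinset u ∩ M) ∩ (G.neighborFinset w ∩ M), p ≠ q → G.Adj p q := by
        intro p hp q hq hpq
        rw [Finset.mem_inter, Finset.mem_inter, Finset.mem_inter] at hp hq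
        have hp' : p ∈ G.neighborFinset u ∩ G.neighborFinset w :=
          Finset.mem_inter.mpr ⟨hp.1.1, hp.2.1⟩
        have hq' : q ∈ G.neighborFinset u ∩ G.neighborFinset w :=
          Finset.mem_inter.mpr ⟨hq.1.1, hq.2.1⟩
        exact hclique (Finset.mem_coe.mpr hp') (Finset.mem_coe.mpr hq') hpq
      have hle := hmax _ hCsub hCadj
      have hint := Finset.card_inter_add_card_union (G.neighborFinset u ∩ M)
        (G.neighborFinset w ∩ M)
      have hun : ((G.neighborFinset u ∩ M) ∪ (G.neighborFinset w ∩ M)).card ≤ m := by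
        apply Finset.card_le_card
        intro y hy
        rcases Finset.mem_union.mp hy with h | h
        · exact (Finset.mem_inter.mp h).2
        · exact (Finset.mem_inter.mp h).2
      omega
    have hSk : S.card ≤ k := hmax S hSM hSadj
    -- lower bound on edges leaving each vertex of M \ S
    have hlow : ∀ u ∈ M \ S, m ≤ 2 * (G.neighborFinset u ∩ X).card + 2 + k := by
      intro u hu
      rw [Finset.mem_sdiff] at hu
      have hau : 2 * (G.neighborFinset u ∩ M).card ≤ m + k := by
        by_contra h
        push_neg at h
        exact hu.2 (Finset.mem_filter.mpr ⟨hu.1, h⟩)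
      have hdeg : G.degree v ≤ G.degree u := hmin u
      have hsplit : G.degree u ≤ (G.neighborFinset u ∩ X).card +
          (G.neighborFinset u ∩ insert v D).card := by
        have hsub : G.neighborFinset u ⊆
            (G.neighborFinset u ∩ X) ∪ (G.neighborFinset u ∩ insert v D) := by
          intro y hy
          by_cases hyD : y ∈ insert v D
          · exact Finset.mem_union_right _ (Finset.mem_inter.mpr ⟨hy, hyD⟩)
          · exact Finset.mem_union_left _ (Finset.mem_inter.mpr
              ⟨hy, Finset.mem_sdiff.mpr ⟨Finset.mem_univ _, hyD⟩⟩)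
        calc G.degree u = (G.neighborFinset u).card :=
              (G.card_neighborFinset_eq_degree u).symm
          _ ≤ _ := le_trans (Finset.card_le_card hsub) (Finset.card_union_le _ _)
      have h2 : (G.neighborFinset u ∩ insert v D).card ≤
          1 + (G.neighborFinset u ∩ D).card := by
        have hsub : G.neighborFinset u ∩ insert v D ⊆
            insert v (G.neighborFinset u ∩ D) := by
          intro y hy
          rw [Finset.mem_inter, Finset.mem_insert] at hy
          rcases hy.2 with rfl | h
          · exact Finset.mem_insert_self _ _
          · exact Finset.mem_insert_of_mem (Finset.mem_inter.mpr ⟨hy.1, h⟩)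
        calc (G.neighborFinset u ∩ insert v D).card
            ≤ (insert v (G.neighborFinset u ∩ D)).card := Finset.card_le_card hsub
          _ ≤ 1 + (G.neighborFinset u ∩ D).card := by
              rw [add_comm]; exact Finset.card_insert_le _ _
      have h3 : (G.neighborFinset u ∩ D).card ≤
          (G.neighborFinset u ∩ M).card + (D \ M).card := by
        have hsub : G.neighborFinset u ∩ D ⊆ (G.neighborFinset u ∩ M) ∪ (D \ M) := by
          intro y hy
          rw [Finset.mem_inter] at hy
          by_cases hyM : y ∈ M
          · exact Finset.mem_union_left _ (Finset.mem_inter.mpr ⟨hy.1, hyM⟩)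
          · exact Finset.mem_union_right _ (Finset.mem_sdiff.mpr ⟨hy.2, hyM⟩)
        exact le_trans (Finset.card_le_card hsub) (Finset.card_union_le _ _)
      have h4 : (D \ M).card + m = G.degree v := by
        rw [← G.card_neighborFinset_eq_degree v]
        exact Finset.card_sdiff_add_card_eq_card hM
      omega
    -- double counting
    have hswap : ∑ u ∈ M, (G.neighborFinset u ∩ X).card
        = ∑ x ∈ X, (G.neighborFinset x ∩ M).card := by
      have hform : ∀ (s : Finset V) (u : V),
          (G.neighborFinset u ∩ s).card = ∑ x ∈ s, if G.Adj u x then 1 else 0 := by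
        intro s u
        rw [← Finset.card_filter]
        congr 1
        ext y
        simp [mem_neighborFinset, and_comm]
      calc ∑ u ∈ M, (G.neighborFinset u ∩ X).card
          = ∑ u ∈ M, ∑ x ∈ X, if G.Adj u x then 1 else 0 :=
            Finset.sum_congr rfl fun u _ => hform X u
        _ = ∑ x ∈ X, ∑ u ∈ M, if G.Adj u x then 1 else 0 := Finset.sum_comm
        _ = ∑ x ∈ X, ∑ u ∈ M, if G.Adj x u then 1 else 0 := by
            refine Finset.sum_congr rfl fun x _ => Finset.sum_congr rfl fun u _ => ?_
            exact if_congr (G.adj_comm u x) rfl rfl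
        _ = ∑ x ∈ X, (G.neighborFinset x ∩ M).card :=
            (Finset.sum_congr rfl fun x _ => (hform M x).symm)
    have hub : ∑ x ∈ X, (G.neighborFinset x ∩ M).card ≤ X.card * k := by
      have := Finset.sum_le_card_nsmul X (fun x => (G.neighborFinset x ∩ M).card) k hXbound
      simpa [smul_eq_mul] using this
    have hsum1 : (M \ S).card * m ≤
        ∑ u ∈ M \ S, (2 * (G.neighborFinset u ∩ X).card + 2 + k) := by
      have := Finset.card_nsmul_le_sum (M \ S)
        (fun u => 2 * (G.neighborFinset u ∩ X).card + 2 + k) m hlow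
      simpa [smul_eq_mul] using this
    have hsum2 : ∑ u ∈ M \ S, (2 * (G.neighborFinset u ∩ X).card + 2 + k)
        = 2 * (∑ u ∈ M \ S, (G.neighborFinset u ∩ X).card) + (2 + k) * (M \ S).card := by
      rw [Finset.sum_add_distrib, Finset.sum_add_distrib, ← Finset.mul_sum,
        Finset.sum_const, Finset.sum_const, smul_eq_mul, smul_eq_mul]
      ring
    have hsum3 : ∑ u ∈ M \ S, (G.neighborFinset u ∩ X).card
        ≤ ∑ u ∈ M, (G.neighborFinset u ∩ X).card :=
      Finset.sum_le_sum_of_subset (Finset.sdiff_subset)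
    have hc : (M \ S).card + S.card = m := Finset.card_sdiff_add_card_eq_card hSM
    -- collect everything
    have hmain : (M \ S).card * m ≤ 2 * (X.card * k) + (2 + k) * (M \ S).card := by
      calc (M \ S).card * m
          ≤ 2 * (∑ u ∈ M \ S, (G.neighborFinset u ∩ X).card) + (2 + k) * (M \ S).card := by
            rw [← hsum2]; exact hsum1
        _ ≤ 2 * (∑ u ∈ M, (G.neighborFinset u ∩ X).card) + (2 + k) * (M \ S).card := by
            gcongr
        _ = 2 * (∑ x ∈ X, (G.neighborFinset x ∩ M).card) + (2 + k) * (M \ S).card := by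
            rw [hswap]
        _ ≤ 2 * (X.card * k) + (2 + k) * (M \ S).card := by gcongr
    -- final arithmetic
    set c := (M \ S).card with hcdef
    set Xc := X.card with hXc
    set d := G.degree v with hd
    zify at hmain hc hSk hXcard hmd hdn hk1 hkm ⊢
    rcases le_or_gt (m : ℤ) (k + 2) with hcase | hcase
    · nlinarith [hmain, hc, hSk, hXcard, hmd, hdn, hk1, hkm]
    · have hcge : (m : ℤ) - k ≤ c := by omega
      have hpos : (0 : ℤ) ≤ m - k - 2 := by omega
      have hmul : ((m : ℤ) - k) * (m - k - 2) ≤ c * (m - k - 2) :=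
        mul_le_mul_of_nonneg_right hcge hpos
      nlinarith [hmain, hc, hSk, hXcard, hmd, hdn, hk1, hkm, hmul]
  refine ⟨K₀, hK₀M, ?_, ?_⟩
  · intro a ha b hb hab
    exact hK₀adj a (Finset.mem_coe.mp ha) b (Finset.mem_coe.mp hb) hab
  · have h4n : (0 : ℝ) < 4 * Fintype.card V := by
      have : (0:ℝ) < (Fintype.card V : ℝ) := by exact_mod_cast hnpos
      linarith
    rw [div_le_iff₀ h4n]
    have : ((M.card * M.card : ℕ) : ℝ) ≤ ((4 * Fintype.card V * K₀.card : ℕ) : ℝ) := by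
      exact_mod_cast key
    push_cast at this ⊢
    nlinarith [this]
end

section
/- Let G be a graph on n vertices, v a vertex of minimum degree, D = N(v), and M ⊆ D. Then either (i) there exist a set J₁ ⊆ M with |J₁| ≥ |M|²/(4n) and two nonadjacent vertices x,y ∈ V(G)∖J₁ both adjacent to every vertex of J₁, or (ii) there is a clique J₂ ⊆ M with |J₂| ≥ |M|/4. -/
open SimpleGraph Finset

/-!
Let `t = |M|²/(4n)`. If some nonadjacent pair `x ≠ y` has at least `t` common neighbours in `M`,
these form `J₁`. Otherwise, for `z ∈ M` let `f z = |M ∖ N[z]|`. Since `deg v ≤ deg z`, `f z` is at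
most `|N(z) ∖ N[v]|`, and double counting the edges between `M` and `V ∖ N[v]` (each `w` there has
fewer than `t` neighbours in `M ⊆ N(v)`) gives `∑_{z ∈ M} f z ≤ n t = |M|²/4`. For nonadjacent
`x ≠ y` in `M`, the vertices of `M` outside `N(x) ∩ N(y)` are counted by `f x + f y`, so
`f x + f y > |M| - t ≥ 3|M|/4`. Hence the vertices with `f z < 3|M|/8` form a clique, and by
Markov's inequality there are at least `|M|/3` of them.
-/

namespace SimpleGraph

section Clique

variable {V : Type*} {G : SimpleGraph V}

theorem exists_isClique_subset_mul_card_sub_le (M : Finset V) {f : V → ℝ}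
    (hf : ∀ z ∈ M, 0 ≤ f z) (c : ℝ)
    (hpair : ∀ x ∈ M, ∀ y ∈ M, x ≠ y → ¬G.Adj x y → 2 * c < f x + f y) :
    ∃ J ⊆ M, G.IsClique (J : Set V) ∧ c * (#M - #J) ≤ ∑ z ∈ M, f z := by
  refine ⟨{z ∈ M | f z < c}, filter_subset _ _, ?_, ?_⟩
  · intro x hx y hy hne
    simp only [coe_filter, Set.mem_ofPred_eq] at hx hy
    by_contra hadj
    linarith [hpair x hx.1 y hy.1 hne hadj]
  · have hcard : (#M : ℝ) - #{z ∈ M | f z < c} = #{z ∈ M | ¬f z < c} := by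
      rw [← card_filter_add_card_filter_not (fun z => f z < c)]
      push_cast; ring
    calc c * (#M - #{z ∈ M | f z < c}) = ∑ z ∈ M with ¬f z < c, c := by
          rw [hcard, sum_const, nsmul_eq_mul, mul_comm]
      _ ≤ ∑ z ∈ M with ¬f z < c, f z := sum_le_sum fun z hz => not_lt.1 (mem_filter.1 hz).2
      _ ≤ ∑ z ∈ M, f z := sum_le_sum_of_subset_of_nonneg (filter_subset _ _) fun z hz _ => hf z hz

end Clique

variable {V : Type*} [Fintype V] [DecidableEq V] (G : SimpleGraph V) [DecidableRel G.Adj]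

def closedNeighborFinset (v : V) : Finset V := insert v (G.neighborFinset v)

variable {G}

@[simp]
theorem mem_closedNeighborFinset {v w : V} :
    w ∈ G.closedNeighborFinset v ↔ w = v ∨ G.Adj v w := by
  simp [closedNeighborFinset]

theorem card_sdiff_closedNeighborFinset_add_card_inter {v z : V} (h : G.Adj v z) :
    #(G.neighborFinset v \ G.closedNeighborFinset z) + #(G.neighborFinset v ∩ G.neighborFinset z)
      + 1 = G.degree v := by
  have hz : z ∈ G.neighborFinset v \ G.neighborFinset z := by simp [h]
  have herase : G.neighborFinset v \ G.closedNeighborFinset z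
      = (G.neighborFinset v \ G.neighborFinset z).erase z := by
    ext w
    simp only [closedNeighborFinset, mem_sdiff, mem_neighborFinset, mem_insert, not_or, mem_erase]
    tauto
  rw [herase, add_right_comm, card_erase_add_one hz, card_sdiff_add_card_inter,
    card_neighborFinset_eq_degree]

theorem card_sdiff_closedNeighborFinset_le_of_degree_le {v z : V} (h : G.Adj v z)
    (hdeg : G.degree v ≤ G.degree z) :
    #(G.neighborFinset v \ G.closedNeighborFinset z)
      ≤ #(G.neighborFinset z \ G.closedNeighborFinset v) := by
  have hv := card_sdiff_closedNeighborFinset_add_card_inter h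
  have hz := card_sdiff_closedNeighborFinset_add_card_inter h.symm
  rw [inter_comm] at hz
  omega

theorem sum_card_sdiff_closedNeighborFinset_le {v : V} (hmin : ∀ u, G.degree v ≤ G.degree u)
    {M : Finset V} (hM : M ⊆ G.neighborFinset v) :
    ∑ z ∈ M, #(M \ G.closedNeighborFinset z)
      ≤ ∑ w ∈ univ \ G.closedNeighborFinset v, #(M ∩ G.neighborFinset w) := by
  calc ∑ z ∈ M, #(M \ G.closedNeighborFinset z)
      ≤ ∑ z ∈ M, #((univ \ G.closedNeighborFinset v).bipartiteAbove G.Adj z) := by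
        refine sum_le_sum fun z hz => ?_
        have hvz : G.Adj v z := (G.mem_neighborFinset v z).1 (hM hz)
        calc #(M \ G.closedNeighborFinset z)
            ≤ #(G.neighborFinset v \ G.closedNeighborFinset z) :=
              card_le_card (sdiff_subset_sdiff hM subset_rfl)
          _ ≤ #(G.neighborFinset z \ G.closedNeighborFinset v) :=
              card_sdiff_closedNeighborFinset_le_of_degree_le hvz (hmin z)
          _ = _ := by
              congr 1; ext w
              simp only [mem_sdiff, mem_neighborFinset, mem_closedNeighborFinset, not_or,
                bipartiteAbove, mem_filter, mem_univ, true_and]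
              tauto
    _ = ∑ w ∈ univ \ G.closedNeighborFinset v, #(M.bipartiteBelow G.Adj w) :=
        sum_card_bipartiteAbove_eq_sum_card_bipartiteBelow _
    _ = _ := by
        refine sum_congr rfl fun w _ => congrArg card ?_
        ext z; simp [bipartiteBelow, adj_comm]

theorem sum_card_sdiff_closedNeighborFinset_le_card_mul {v : V}
    (hmin : ∀ u, G.degree v ≤ G.degree u) {M : Finset V} (hM : M ⊆ G.neighborFinset v) {t : ℝ}
    (ht : 0 ≤ t) (hsparse : ∀ w ∉ G.closedNeighborFinset v, (#(M ∩ G.neighborFinset w) : ℝ) < t) :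
    ∑ z ∈ M, (#(M \ G.closedNeighborFinset z) : ℝ) ≤ Fintype.card V * t :=
  calc ∑ z ∈ M, (#(M \ G.closedNeighborFinset z) : ℝ)
      ≤ ∑ w ∈ univ \ G.closedNeighborFinset v, (#(M ∩ G.neighborFinset w) : ℝ) := by
        exact_mod_cast sum_card_sdiff_closedNeighborFinset_le hmin hM
    _ ≤ ∑ w ∈ univ \ G.closedNeighborFinset v, t :=
        sum_le_sum fun w hw => (hsparse w (mem_sdiff.1 hw).2).le
    _ ≤ Fintype.card V * t := by
        rw [sum_const, nsmul_eq_mul]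
        gcongr
        exact_mod_cast card_le_univ _

theorem card_le_card_inter_inter_add_card_sdiff_add_card_sdiff {x y : V} (hxy : x ≠ y)
    (hadj : ¬G.Adj x y) (M : Finset V) :
    #M ≤ #(M ∩ G.neighborFinset x ∩ G.neighborFinset y) + #(M \ G.closedNeighborFinset x)
      + #(M \ G.closedNeighborFinset y) := by
  have hcover : M ⊆ (M ∩ G.neighborFinset x ∩ G.neighborFinset y)
      ∪ (M \ G.closedNeighborFinset x) ∪ (M \ G.closedNeighborFinset y) := by
    intro u hu
    have hsymm := G.adj_comm u x
    simp only [mem_union, mem_inter, mem_sdiff, mem_neighborFinset, mem_closedNeighborFinset]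
    by_cases hux : u = x
    · subst hux; exact Or.inr ⟨hu, by tauto⟩
    · by_cases hxu : G.Adj x u
      · have : u ≠ y := by rintro rfl; exact hadj hxu
        tauto
      · tauto
  exact (card_le_card hcover).trans ((card_union_le _ _).trans (by gcongr; exact card_union_le _ _))

end SimpleGraph

/-- Let `v` be a vertex of minimum degree of `G`, `D = N(v)`, `M ⊆ D`. Then either
(i) there is `J₁ ⊆ M` with `|J₁| ≥ |M|²/(4n)` and two nonadjacent vertices
`x, y ∉ J₁` both adjacent to every vertex of `J₁`, or (ii) there is a clique
`J₂ ⊆ M` with `|J₂| ≥ |M|/4`. -/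
theorem stmt_13 {V : Type*} [Fintype V] [DecidableEq V] (G : SimpleGraph V)
    [DecidableRel G.Adj]
    (v : V) (hmin : ∀ u : V, G.degree v ≤ G.degree u)
    (M : Finset V) (hM : M ⊆ G.neighborFinset v) :
    (∃ J₁ : Finset V, J₁ ⊆ M ∧ (M.card : ℝ) ^ 2 / (4 * Fintype.card V) ≤ (J₁.card : ℝ) ∧
      ∃ x y : V, x ∉ J₁ ∧ y ∉ J₁ ∧ x ≠ y ∧ ¬G.Adj x y ∧
        (∀ u ∈ J₁, G.Adj x u) ∧ (∀ u ∈ J₁, G.Adj y u)) ∨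
    (∃ J₂ : Finset V, J₂ ⊆ M ∧ G.IsClique (J₂ : Set V) ∧
      (M.card : ℝ) / 4 ≤ (J₂.card : ℝ)) := by
  set t : ℝ := (#M : ℝ) ^ 2 / (4 * Fintype.card V) with ht
  by_cases hcommon : ∃ x y, x ≠ y ∧ ¬G.Adj x y ∧ t ≤ #(M ∩ G.neighborFinset x ∩ G.neighborFinset y)
  · obtain ⟨x, y, hxy, hadj, hJ⟩ := hcommon
    left
    refine ⟨_, inter_subset_left.trans inter_subset_left, hJ, x, y, ?_, ?_, hxy, hadj, ?_, ?_⟩ <;>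
      simp +contextual
  push Not at hcommon
  right
  have hn : (0 : ℝ) < Fintype.card V := by exact_mod_cast Fintype.card_pos_iff.2 ⟨v⟩
  have hMn : (#M : ℝ) ≤ Fintype.card V := by exact_mod_cast card_le_univ M
  have htM : t ≤ #M / 4 := by
    rw [div_le_div_iff₀ (by positivity) (by norm_num)]
    nlinarith
  have hsum : ∑ z ∈ M, (#(M \ G.closedNeighborFinset z) : ℝ) ≤ #M ^ 2 / 4 := by
    calc _ ≤ Fintype.card V * t := by
          refine sum_card_sdiff_closedNeighborFinset_le_card_mul hmin hM (by positivity)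
            fun w hw => ?_
          have hw' : ¬(w = v ∨ G.Adj v w) := by simpa using hw
          have hlt := hcommon v w (Ne.symm fun h => hw' (Or.inl h)) fun h => hw' (Or.inr h)
          rwa [inter_eq_left.2 hM] at hlt
      _ = #M ^ 2 / 4 := by rw [ht]; field_simp
  obtain ⟨J, hJM, hJ, hJcard⟩ := G.exists_isClique_subset_mul_card_sub_le M
    (f := fun z => #(M \ G.closedNeighborFinset z)) (fun _ _ => by positivity) (3 * #M / 8)
    fun x _ y _ hxy hadj => by
      have hcover := G.card_le_card_inter_inter_add_card_sdiff_add_card_sdiff hxy hadj M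
      rw [← Nat.cast_le (α := ℝ)] at hcover
      push_cast at hcover
      linarith [hcommon x y hxy hadj]
  refine ⟨J, hJM, hJ, ?_⟩
  nlinarith
end

section
/- Every K_{2,2}-free graph G on n vertices has a clique cover of size O(n^{3/2}); explicitly, there is an absolute constant C such that every K_{2,2}-free graph on n vertices has a clique cover of size at most C·n^{3/2}. -/
open SimpleGraph Finset

/-!
Induct on the vertex set, each time covering the edges at a vertex `v` of minimum degree in
`G[U]`; it suffices to cover its neighbourhood `H` by `O(√n)` cliques, which is done greedily with
maximum cliques. In a `K_{2,2}`-free graph the common neighbourhood of two non-adjacent vertices is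
a clique. So if `F ⊆ H` has clique number `w` and degree sum `D` inside `F`, the minimality of
`deg v` gives `|F|² ≤ |F| + D + n w`, while Turán's theorem in the neighbourhoods inside `F` and
Cauchy–Schwarz give `D² ≤ w (w + 1) |F|³`. Hence `|F| ≤ 8 w²` or `|F|² ≤ 4 n w`, and in either
case removing a maximum clique lowers the potential `6 √|F| + 10 |F| √n / (|F| + √n)` by at least
one, so at most `16 √n` cliques are used.
-/

lemma le_two_mul_sqrt_mul_sub_sqrt {r g : ℝ} (hg : 0 ≤ g) (hgr : g ≤ r) :
    g ≤ 2 * √r * (√r - √(r - g)) := by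
  have hr := Real.sq_sqrt (hg.trans hgr)
  have hrg := Real.sq_sqrt (sub_nonneg.2 hgr)
  have hle : √(r - g) ≤ √r := Real.sqrt_le_sqrt (by linarith)
  nlinarith [Real.sqrt_nonneg (r - g)]

lemma mul_div_add_sub_mul_div_add {r g s : ℝ} (hs : 0 < s) (hg : 0 ≤ g) (hgr : g ≤ r) :
    r * s / (r + s) - (r - g) * s / (r - g + s) = g * s ^ 2 / ((r + s) * (r - g + s)) := by
  have : 0 < r - g + s := by linarith
  have : 0 < r + s := by linarith
  field_simp
  ring

/-- `6 √R` pays for the steps removing a clique of size at least `√(R / 8)`, and the concave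
`10 R √n / (R + √n)` for the steps removing a clique of size at least `R² / 4n`. -/
noncomputable def coverPotential (n R : ℕ) : ℝ := 6 * √R + 10 * (R * √n / (R + √n))

lemma coverPotential_zero (n : ℕ) : coverPotential n 0 = 0 := by
  simp [coverPotential]

lemma coverPotential_le {n R : ℕ} (hRn : R ≤ n) : coverPotential n R ≤ 16 * √n := by
  have hsqrt : √R ≤ √n := Real.sqrt_le_sqrt (by exact_mod_cast hRn)
  have hfrac : R * √n / (R + √n) ≤ √n := by
    rcases (Real.sqrt_nonneg n).eq_or_lt with h | h
    · simp [← h]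
    · rw [div_le_iff₀ (by positivity)]
      nlinarith [Real.sqrt_nonneg n]
  unfold coverPotential
  linarith

lemma coverPotential_step {n R g : ℕ} (hg : 1 ≤ g) (hgR : g ≤ R) (hRn : R ≤ n)
    (h : R ≤ 8 * g ^ 2 ∨ R ^ 2 ≤ 4 * n * g) :
    coverPotential n (R - g) + 1 ≤ coverPotential n R := by
  have hg' : (1 : ℝ) ≤ g := by exact_mod_cast hg
  have hgR' : (g : ℝ) ≤ R := by exact_mod_cast hgR
  have hs : 0 < √n := Real.sqrt_pos.2 (by exact_mod_cast (by omega : 0 < n))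
  have hsq : √n ^ 2 = n := Real.sq_sqrt (Nat.cast_nonneg n)
  have hgain := le_two_mul_sqrt_mul_sub_sqrt (by linarith) hgR'
  have hle : √(R - g) ≤ √R := Real.sqrt_le_sqrt (by linarith)
  have hden : 0 < ((R : ℝ) + √n) * (R - g + √n) := by
    have : (0 : ℝ) < R - g + √n := by linarith
    positivity
  have hfrac := mul_div_add_sub_mul_div_add (r := R) hs (by linarith) hgR'
  have hfrac_nonneg : 0 ≤ (g : ℝ) * √n ^ 2 / ((R + √n) * (R - g + √n)) := by positivity
  unfold coverPotential
  rw [Nat.cast_sub hgR]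
  rcases h with hA | hB
  · have hA' : (R : ℝ) ≤ (3 * g) ^ 2 := by
      have : (R : ℝ) ≤ 8 * g ^ 2 := by exact_mod_cast hA
      nlinarith
    have h3g : √R ≤ 3 * g := Real.sqrt_le_iff.2 ⟨by positivity, hA'⟩
    have : 1 ≤ 6 * (√R - √(R - g)) := by
      nlinarith [mul_le_mul_of_nonneg_right h3g (sub_nonneg.2 hle)]
    linarith
  · have hB' : (R : ℝ) ^ 2 ≤ 4 * √n ^ 2 * g := by rw [hsq]; exact_mod_cast hB
    have : 1 ≤ 10 * ((g : ℝ) * √n ^ 2 / ((R + √n) * (R - g + √n))) := by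
      rw [mul_div_assoc', le_div_iff₀ hden]
      have : (0 : ℝ) ≤ g * (R + √n) := by positivity
      nlinarith [sq_nonneg ((R : ℝ) - √n), mul_le_mul_of_nonneg_left hg' (sq_nonneg √n)]
    linarith

section Cliques

variable {V : Type*} {G : SimpleGraph V}

def CliqueBound (G : SimpleGraph V) (F : Finset V) (w : ℕ) : Prop :=
  ∀ B ⊆ F, G.IsClique (B : Set V) → #B ≤ w

lemma CliqueBound.mono {F F' : Finset V} {w : ℕ} (h : CliqueBound G F w) (hF : F' ⊆ F) :
    CliqueBound G F' w :=
  fun B hB => h B (hB.trans hF)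

variable [DecidableEq V]

lemma isStableSet_pair {u v : V} (h : ¬G.Adj u v) : IsStableSet G {u, v} := by
  intro a ha b hb hab
  simp only [mem_insert, mem_singleton] at ha hb
  rcases ha with rfl | rfl <;> rcases hb with rfl | rfl
  exacts [absurd rfl hab, h, fun h' => h h'.symm, absurd rfl hab]

lemma KstFree.isClique_commonNeighbors (h : KstFree G 2 2) {u v : V} (huv : u ≠ v)
    (hna : ¬G.Adj u v) : G.IsClique (G.commonNeighbors u v) := by
  intro x hx y hy hxy
  by_contra hxy'
  rw [mem_commonNeighbors] at hx hy
  refine h ⟨{u, v}, {x, y}, ?_, card_pair huv, card_pair hxy, isStableSet_pair hna,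
    isStableSet_pair hxy', ?_⟩
  · simp [hx.1.ne', hx.2.ne', hy.1.ne', hy.2.ne']
  · simp [hx, hy]

lemma exists_maximum_clique {F : Finset V} (hF : F.Nonempty) :
    ∃ K ⊆ F, G.IsClique (K : Set V) ∧ K.Nonempty ∧ CliqueBound G F #K := by
  classical
  obtain ⟨x, hx⟩ := hF
  obtain ⟨K, hK, hmax⟩ :=
    exists_max_image (F.powerset.filter fun B : Finset V => G.IsClique (B : Set V)) card
      ⟨{x}, by simp [hx]⟩
  rw [mem_filter, mem_powerset] at hK
  have hbound : CliqueBound G F #K := fun B hBF hB => hmax B (by simp [hBF, hB])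
  refine ⟨K, hK.1, hK.2, ?_, hbound⟩
  rw [← card_pos]
  simpa using hbound {x} (by simp [hx]) (by simp)

lemma CliqueBound.exists_not_adj {F K : Finset V} (hω : CliqueBound G F #K)
    (hK : G.IsClique (K : Set V)) (hKF : K ⊆ F) {x : V} (hxF : x ∈ F) (hxK : x ∉ K) :
    ∃ y ∈ K, x ≠ y ∧ ¬G.Adj x y := by
  by_contra! hcon
  have := hω (insert x K) (insert_subset hxF hKF) (by
    rw [coe_insert]
    exact hK.insert fun y hy hne => hcon y hy hne)
  rw [card_insert_of_notMem hxK] at this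
  omega

variable [DecidableRel G.Adj]

def nonAdjPairs (G : SimpleGraph V) [DecidableRel G.Adj] (D : Finset V) : Finset (V × V) :=
  {p ∈ D ×ˢ D | p.1 ≠ p.2 ∧ ¬G.Adj p.1 p.2}

lemma card_nonAdjPairs_sdiff_add_le {D K : Finset V} (hKD : K ⊆ D)
    (hK : ∀ x ∈ D \ K, ∃ y ∈ K, x ≠ y ∧ ¬G.Adj x y) :
    #(nonAdjPairs G (D \ K)) + 2 * #(D \ K) ≤ #(nonAdjPairs G D) := by
  choose! f hfK hfne hfadj using hK
  set P := D \ K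
  set out := P.image fun x => (x, f x)
  set into := P.image fun x => (f x, x)
  have hPK : ∀ x ∈ P, x ∉ K := fun x hx => (mem_sdiff.1 hx).2
  have hdisj : Disjoint (nonAdjPairs G P) (out ∪ into) := by
    simp only [Finset.disjoint_left, nonAdjPairs, mem_filter, mem_product, mem_union, mem_image,
      out, into]
    rintro _ ⟨⟨h1, h2⟩, -⟩ (⟨x, hx, rfl⟩ | ⟨x, hx, rfl⟩)
    exacts [hPK _ h2 (hfK x hx), hPK _ h1 (hfK x hx)]
  have hdisj' : Disjoint out into := by
    simp only [Finset.disjoint_left, mem_image, out, into]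
    rintro _ ⟨x, hx, rfl⟩ ⟨y, hy, hxy⟩
    obtain ⟨rfl, -⟩ := Prod.mk.inj hxy
    exact hPK _ hx (hfK _ hy)
  have hsub : nonAdjPairs G P ∪ (out ∪ into) ⊆ nonAdjPairs G D := by
    have hPD : P ⊆ D := sdiff_subset
    simp only [subset_iff, nonAdjPairs, mem_union, mem_filter, mem_product, mem_image, out, into]
    rintro _ (⟨⟨h1, h2⟩, h⟩ | ⟨x, hx, rfl⟩ | ⟨x, hx, rfl⟩)
    · exact ⟨⟨hPD h1, hPD h2⟩, h⟩
    · exact ⟨⟨hPD hx, hKD (hfK x hx)⟩, hfne x hx, hfadj x hx⟩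
    · exact ⟨⟨hKD (hfK x hx), hPD hx⟩, (hfne x hx).symm, fun h => hfadj x hx h.symm⟩
  have hout : #out = #P := card_image_of_injective _ fun x y h => (Prod.ext_iff.1 h).1
  have hinto : #into = #P := card_image_of_injective _ fun x y h => (Prod.ext_iff.1 h).2
  have := card_le_card hsub
  rw [card_union_of_disjoint hdisj, card_union_of_disjoint hdisj', hout, hinto] at this
  omega

/-- Turán's bound, in the form "few non-edges force a large clique". -/
lemma sq_card_le_mul_card_nonAdjPairs_add {D : Finset V} {w : ℕ} (hω : CliqueBound G D w) :
    #D ^ 2 ≤ w * (#(nonAdjPairs G D) + #D) := by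
  induction D using strongInduction with
  | H D ih =>
  rcases D.eq_empty_or_nonempty with rfl | hD
  · simp
  obtain ⟨K, hKD, hK, hKne, hKmax⟩ := exists_maximum_clique (G := G) hD
  have ih' := ih (D \ K) (sdiff_ssubset hKD hKne) (hω.mono sdiff_subset)
  have hsplit := card_nonAdjPairs_sdiff_add_le hKD fun x hx =>
    hKmax.exists_not_adj hK hKD (mem_sdiff.1 hx).1 (mem_sdiff.1 hx).2
  have hkw : #K ≤ w := hω K hKD hK
  rw [← card_sdiff_add_card_eq_card hKD]
  nlinarith [Nat.mul_le_mul_right #(D \ K) hkw, Nat.mul_le_mul_right #K hkw,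
    Nat.mul_le_mul_left w hsplit]

variable (h : KstFree G 2 2) {F : Finset V} {w : ℕ} (hω : CliqueBound G F w)
include h hω

lemma sum_card_nonAdjPairs_neighbors_le :
    ∑ x ∈ F, #(nonAdjPairs G {y ∈ F | G.Adj x y}) ≤ w * #F ^ 2 := by
  set r : V → V × V → Prop := fun x p => G.Adj x p.1 ∧ G.Adj x p.2
  have hrw : ∀ x ∈ F,
      nonAdjPairs G {y ∈ F | G.Adj x y} = (nonAdjPairs G F).bipartiteAbove r x := by
    intro x _
    ext p
    simp only [nonAdjPairs, bipartiteAbove, mem_filter, mem_product, r]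
    tauto
  have hbelow : ∀ p ∈ nonAdjPairs G F, #(F.bipartiteBelow r p) ≤ w := by
    intro p hp
    simp only [nonAdjPairs, mem_filter] at hp
    refine hω _ (filter_subset _ _) ((h.isClique_commonNeighbors hp.2.1 hp.2.2).subset ?_)
    intro x hx
    simp only [mem_coe, mem_bipartiteBelow, r] at hx
    exact (mem_commonNeighbors G).2 ⟨hx.2.1.symm, hx.2.2.symm⟩
  have hpairs : #(nonAdjPairs G F) ≤ #F ^ 2 := by
    rw [sq, ← card_product]
    exact card_filter_le _ _
  rw [sum_congr rfl fun x hx => congrArg card (hrw x hx),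
    sum_card_bipartiteAbove_eq_sum_card_bipartiteBelow]
  calc _ ≤ #(nonAdjPairs G F) * w := by simpa using sum_le_card_nsmul _ _ _ hbelow
    _ ≤ w * #F ^ 2 := by rw [mul_comm]; gcongr

lemma sum_sq_card_neighbors_le :
    ∑ x ∈ F, #{y ∈ F | G.Adj x y} ^ 2 ≤ w * (w + 1) * #F ^ 2 := by
  have hdeg : ∑ x ∈ F, #{y ∈ F | G.Adj x y} ≤ #F ^ 2 := by
    simpa [sq] using sum_le_card_nsmul F _ #F fun x _ => card_filter_le F (G.Adj x)
  calc ∑ x ∈ F, #{y ∈ F | G.Adj x y} ^ 2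
      ≤ ∑ x ∈ F, w * (#(nonAdjPairs G {y ∈ F | G.Adj x y}) + #{y ∈ F | G.Adj x y}) :=
        sum_le_sum fun x _ => sq_card_le_mul_card_nonAdjPairs_add (hω.mono (filter_subset _ _))
    _ = w * (∑ x ∈ F, #(nonAdjPairs G {y ∈ F | G.Adj x y}) +
          ∑ x ∈ F, #{y ∈ F | G.Adj x y}) := by
        rw [← mul_sum, sum_add_distrib]
    _ ≤ w * (w * #F ^ 2 + #F ^ 2) := by
        gcongr
        exact sum_card_nonAdjPairs_neighbors_le h hω
    _ = w * (w + 1) * #F ^ 2 := by ring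

lemma sq_sum_card_neighbors_le :
    (∑ x ∈ F, #{y ∈ F | G.Adj x y}) ^ 2 ≤ w * (w + 1) * #F ^ 3 :=
  calc _ ≤ #F * ∑ x ∈ F, #{y ∈ F | G.Adj x y} ^ 2 := sq_sum_le_card_mul_sum_sq
    _ ≤ #F * (w * (w + 1) * #F ^ 2) := by gcongr; exact sum_sq_card_neighbors_le h hω
    _ = w * (w + 1) * #F ^ 3 := by ring

lemma sum_card_neighbors_le_of_forall_adj {v : V} (hFv : ∀ x ∈ F, G.Adj v x) {T : Finset V}
    (hT : ∀ y ∈ T, v ≠ y ∧ ¬G.Adj v y) :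
    ∑ x ∈ F, #{y ∈ T | G.Adj x y} ≤ #T * w := by
  rw [← smul_eq_mul]
  refine (sum_card_bipartiteAbove_eq_sum_card_bipartiteBelow (r := G.Adj)).trans_le
    (sum_le_card_nsmul _ _ _ fun y hy => ?_)
  refine hω _ (filter_subset _ _)
    ((h.isClique_commonNeighbors (hT y hy).1 (hT y hy).2).subset ?_)
  intro x hx
  simp only [mem_coe, mem_bipartiteBelow] at hx
  exact (mem_commonNeighbors G).2 ⟨hFv x hx.1, hx.2.symm⟩

end Cliques

section MinDegree

variable {V : Type*} [DecidableEq V] {G : SimpleGraph V} [DecidableRel G.Adj]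

lemma card_neighbors_le_of_subset_neighbors (x v : V) (U F : Finset V) :
    #{y ∈ U | G.Adj x y} ≤ 1 + #{y ∈ F | G.Adj x y} + #({y ∈ U | G.Adj v y} \ F) +
      #{y ∈ {y ∈ U | v ≠ y ∧ ¬G.Adj v y} | G.Adj x y} := by
  have hsub : {y ∈ U | G.Adj x y} ⊆ insert v ({y ∈ F | G.Adj x y} ∪
      ({y ∈ U | G.Adj v y} \ F) ∪ {y ∈ {y ∈ U | v ≠ y ∧ ¬G.Adj v y} | G.Adj x y}) := by
    intro y hy
    simp only [mem_filter, mem_insert, mem_union, mem_sdiff] at hy ⊢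
    tauto
  grw [card_le_card hsub, card_insert_le, card_union_le, card_union_le]
  omega

variable [Fintype V]

lemma sq_card_le_of_subset_neighbors_of_minDegree (h : KstFree G 2 2) {U : Finset V} {v : V}
    (hmin : ∀ x ∈ U, #{y ∈ U | G.Adj v y} ≤ #{y ∈ U | G.Adj x y}) {F : Finset V}
    (hFH : F ⊆ {y ∈ U | G.Adj v y}) {w : ℕ} (hω : CliqueBound G F w) :
    #F ^ 2 ≤ #F + ∑ x ∈ F, #{y ∈ F | G.Adj x y} + Fintype.card V * w := by
  set H := {y ∈ U | G.Adj v y}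
  set T := {y ∈ U | v ≠ y ∧ ¬G.Adj v y}
  have hdeg : ∀ x ∈ F, #H ≤ 1 + #{y ∈ F | G.Adj x y} + #(H \ F) + #{y ∈ T | G.Adj x y} :=
    fun x hx => (hmin x (filter_subset _ _ (hFH hx))).trans
      (card_neighbors_le_of_subset_neighbors x v U F)
  have hT : ∑ x ∈ F, #{y ∈ T | G.Adj x y} ≤ #T * w :=
    sum_card_neighbors_le_of_forall_adj h hω (fun x hx => (mem_filter.1 (hFH hx)).2)
      fun y hy => (mem_filter.1 hy).2
  have hsum := sum_le_sum hdeg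
  simp only [sum_add_distrib, sum_const, smul_eq_mul] at hsum
  have hH : #(H \ F) + #F = #H := card_sdiff_add_card_eq_card hFH
  have hTV : #T * w ≤ Fintype.card V * w := Nat.mul_le_mul_right w (card_le_univ T)
  nlinarith

lemma le_eight_mul_sq_or_sq_le_four_mul {R e n w : ℕ} (hw : 1 ≤ w) (h1 : R ^ 2 ≤ R + e + n * w)
    (h2 : e ^ 2 ≤ w * (w + 1) * R ^ 3) : R ≤ 8 * w ^ 2 ∨ R ^ 2 ≤ 4 * n * w := by
  by_contra! hR
  have hR8 : 8 ≤ R := by nlinarith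
  rcases le_or_gt (2 * e) (R ^ 2) with he | he
  · nlinarith [Nat.mul_le_mul_right R hR8]
  · have hsq : (R ^ 2) ^ 2 < (2 * e) ^ 2 := Nat.pow_lt_pow_left he two_ne_zero
    have hw2 : w * (w + 1) ≤ 2 * w ^ 2 := by nlinarith
    have : R ^ 3 * R < R ^ 3 * (8 * w ^ 2) := by
      calc R ^ 3 * R = (R ^ 2) ^ 2 := by ring
        _ < 4 * e ^ 2 := by linarith
        _ ≤ 4 * (w * (w + 1) * R ^ 3) := by gcongr
        _ ≤ 4 * (2 * w ^ 2 * R ^ 3) := by gcongr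
        _ = R ^ 3 * (8 * w ^ 2) := by ring
    exact absurd (Nat.lt_of_mul_lt_mul_left this) (not_lt.2 hR.1.le)

lemma exists_large_clique_of_subset_neighbors_of_minDegree (h : KstFree G 2 2) {U : Finset V}
    {v : V} (hmin : ∀ x ∈ U, #{y ∈ U | G.Adj v y} ≤ #{y ∈ U | G.Adj x y}) {F : Finset V}
    (hFH : F ⊆ {y ∈ U | G.Adj v y}) (hF : F.Nonempty) :
    ∃ K ⊆ F, G.IsClique (K : Set V) ∧ K.Nonempty ∧
      (#F ≤ 8 * #K ^ 2 ∨ #F ^ 2 ≤ 4 * Fintype.card V * #K) := by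
  obtain ⟨K, hKF, hK, hKne, hω⟩ := exists_maximum_clique (G := G) hF
  exact ⟨K, hKF, hK, hKne, le_eight_mul_sq_or_sq_le_four_mul (card_pos.2 hKne)
    (sq_card_le_of_subset_neighbors_of_minDegree h hmin hFH hω) (sq_sum_card_neighbors_le h hω)⟩

end MinDegree

section Covers

variable {V : Type*} [DecidableEq V] {G : SimpleGraph V}

lemma exists_clique_vertexCover_of_potential (Φ : ℕ → ℝ) (hΦ : Φ 0 = 0) (F : Finset V)
    (hstep : ∀ F' ⊆ F, F'.Nonempty →
      ∃ K ⊆ F', G.IsClique (K : Set V) ∧ K.Nonempty ∧ Φ (#F' - #K) + 1 ≤ Φ #F') :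
    ∃ 𝒦 : Finset (Finset V), (∀ K ∈ 𝒦, G.IsClique (K : Set V) ∧ K ⊆ F) ∧
      (∀ x ∈ F, ∃ K ∈ 𝒦, x ∈ K) ∧ (#𝒦 : ℝ) ≤ Φ #F := by
  induction F using strongInduction with
  | H F ih =>
  rcases F.eq_empty_or_nonempty with rfl | hF
  · exact ⟨∅, by simp, by simp, by simp [hΦ]⟩
  obtain ⟨K, hKF, hK, hKne, hΦK⟩ := hstep F subset_rfl hF
  obtain ⟨𝒦, hcl, hcov, hcard⟩ := ih (F \ K) (sdiff_ssubset hKF hKne)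
    fun F' hF' => hstep F' (hF'.trans sdiff_subset)
  refine ⟨insert K 𝒦, ?_, ?_, ?_⟩
  · simp only [mem_insert, forall_eq_or_imp]
    exact ⟨⟨hK, hKF⟩, fun X hX => ⟨(hcl X hX).1, (hcl X hX).2.trans sdiff_subset⟩⟩
  · intro x hx
    by_cases hxK : x ∈ K
    · exact ⟨K, mem_insert_self _ _, hxK⟩
    · obtain ⟨X, hX, hxX⟩ := hcov x (mem_sdiff.2 ⟨hx, hxK⟩)
      exact ⟨X, mem_insert_of_mem hX, hxX⟩
  · rw [card_sdiff_of_subset hKF] at hcard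
    calc (#(insert K 𝒦) : ℝ) ≤ #𝒦 + 1 := by exact_mod_cast card_insert_le _ _
      _ ≤ Φ #F := by linarith

lemma exists_clique_cover_of_forall_star_cover (c : ℝ)
    (hstar : ∀ U : Finset V, U.Nonempty → ∃ v ∈ U, ∃ 𝒦 : Finset (Finset V),
      (∀ K ∈ 𝒦, G.IsClique (K : Set V)) ∧ (∀ y ∈ U, G.Adj v y → ∃ K ∈ 𝒦, v ∈ K ∧ y ∈ K) ∧
      (#𝒦 : ℝ) ≤ c)
    (U : Finset V) :
    ∃ 𝒞 : Finset (Finset V), (∀ X ∈ 𝒞, G.IsClique (X : Set V)) ∧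
      (∀ a ∈ U, ∀ b ∈ U, G.Adj a b → ∃ X ∈ 𝒞, a ∈ X ∧ b ∈ X) ∧ (#𝒞 : ℝ) ≤ c * #U := by
  induction U using strongInduction with
  | H U ih =>
  rcases U.eq_empty_or_nonempty with rfl | hU
  · exact ⟨∅, by simp, by simp, by simp⟩
  obtain ⟨v, hv, 𝒦, h𝒦, hstarv, hcard𝒦⟩ := hstar U hU
  obtain ⟨𝒞, h𝒞, hcov, hcard𝒞⟩ := ih (U.erase v) (erase_ssubset hv)
  refine ⟨𝒞 ∪ 𝒦, fun X hX => (mem_union.1 hX).elim (h𝒞 X) (h𝒦 X), ?_, ?_⟩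
  · intro a ha b hb hab
    by_cases hav : a = v
    · subst hav
      obtain ⟨K, hK, haK, hbK⟩ := hstarv b hb hab
      exact ⟨K, mem_union_right _ hK, haK, hbK⟩
    by_cases hbv : b = v
    · subst hbv
      obtain ⟨K, hK, hbK, haK⟩ := hstarv a ha hab.symm
      exact ⟨K, mem_union_right _ hK, haK, hbK⟩
    obtain ⟨X, hX, hX'⟩ := hcov a (mem_erase.2 ⟨hav, ha⟩) b (mem_erase.2 ⟨hbv, hb⟩) hab
    exact ⟨X, mem_union_left _ hX, hX'⟩
  · rw [card_erase_of_mem hv, Nat.cast_sub (card_pos.2 hU)] at hcard𝒞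
    calc (#(𝒞 ∪ 𝒦) : ℝ) ≤ #𝒞 + #𝒦 := by exact_mod_cast card_union_le _ _
      _ ≤ c * #U := by push_cast at hcard𝒞; linarith

lemma exists_star_cover [Fintype V] [DecidableRel G.Adj] (h : KstFree G 2 2) {U : Finset V}
    (hU : U.Nonempty) :
    ∃ v ∈ U, ∃ 𝒦 : Finset (Finset V), (∀ K ∈ 𝒦, G.IsClique (K : Set V)) ∧
      (∀ y ∈ U, G.Adj v y → ∃ K ∈ 𝒦, v ∈ K ∧ y ∈ K) ∧ (#𝒦 : ℝ) ≤ 16 * √(Fintype.card V) := by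
  obtain ⟨v, hv, hmin⟩ := exists_min_image U (fun x => #{y ∈ U | G.Adj x y}) hU
  obtain ⟨𝒦, hcl, hcov, hcard⟩ := exists_clique_vertexCover_of_potential
    (coverPotential (Fintype.card V)) (coverPotential_zero _) {y ∈ U | G.Adj v y}
    fun F hFH hF => by
      obtain ⟨K, hKF, hK, hKne, hlarge⟩ :=
        exists_large_clique_of_subset_neighbors_of_minDegree h hmin hFH hF
      exact ⟨K, hKF, hK, hKne, coverPotential_step (card_pos.2 hKne) (card_le_card hKF)
        (card_le_univ F) hlarge⟩
  refine ⟨v, hv, 𝒦.image (insert v), ?_, ?_, ?_⟩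
  · simp only [mem_image, forall_exists_index, and_imp, forall_apply_eq_imp_iff₂, coe_insert]
    intro K hK
    exact (hcl K hK).1.insert fun y hy _ => (mem_filter.1 ((hcl K hK).2 hy)).2
  · intro y hy hvy
    obtain ⟨K, hK, hyK⟩ := hcov y (mem_filter.2 ⟨hy, hvy⟩)
    exact ⟨insert v K, mem_image_of_mem _ hK, mem_insert_self _ _, mem_insert_of_mem hyK⟩
  · calc (#(𝒦.image (insert v)) : ℝ) ≤ #𝒦 := by exact_mod_cast card_image_le
      _ ≤ _ := hcard
      _ ≤ 16 * √(Fintype.card V) := coverPotential_le (card_le_univ _)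

end Covers

/-- There is an absolute constant `C` such that every `K_{2,2}`-free graph on `n`
vertices has a clique cover of size at most `C·n^{3/2}`. -/
theorem stmt_14 :
    ∃ C : ℝ, 0 < C ∧ ∀ (V : Type) [Fintype V] (G : SimpleGraph V),
      KstFree G 2 2 →
      ∃ 𝒞 : Finset (Finset V), IsCliqueCover G 𝒞 ∧
        (𝒞.card : ℝ) ≤ C * (Fintype.card V : ℝ) ^ ((3 : ℝ) / 2) := by
  classical
  refine ⟨16, by norm_num, fun V _ G h => ?_⟩
  obtain ⟨𝒞, hcl, hcov, hcard⟩ :=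
    exists_clique_cover_of_forall_star_cover _ (fun U hU => exists_star_cover h hU) univ
  have hpow : (Fintype.card V : ℝ) ^ ((3 : ℝ) / 2) = √(Fintype.card V) * Fintype.card V := by
    rw [show (3 : ℝ) / 2 = 1 / 2 + 1 by norm_num, Real.rpow_add' (by positivity) (by norm_num),
      Real.rpow_one, Real.sqrt_eq_rpow]
  refine ⟨𝒞, ⟨hcl, fun a b hab => hcov a (mem_univ a) b (mem_univ b) hab⟩, ?_⟩
  rw [hpow, ← mul_assoc, ← card_univ]
  exact hcard
end

section
/- Let J be a graph on m vertices with ω(J) ≤ W and α(J) < s. Form G by taking two disjoint copies J₁, J₂ of J and making every vertex of J₁ adjacent to every vertex of J₂. Then G has 2m vertices, α(G) < s, every clique of G covers at most W² of the m² edges between V(J₁) and V(J₂), and hence every clique cover of G has size at least m²/W². -/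
open SimpleGraph Finset

def joinGraph {V W : Type*} (J₁ : SimpleGraph V) (J₂ : SimpleGraph W) :
    SimpleGraph (V ⊕ W) where
  Adj x y :=
    match x, y with
    | Sum.inl a, Sum.inl b => J₁.Adj a b
    | Sum.inr a, Sum.inr b => J₂.Adj a b
    | Sum.inl _, Sum.inr _ => True
    | Sum.inr _, Sum.inl _ => True
  symm := ⟨by rintro (a | a) (b | b) h <;> simp_all [SimpleGraph.adj_comm]⟩
  loopless := ⟨by rintro (a | a) h <;> simp_all⟩

/-!
A stable set of the join cannot meet both sides, since every cross pair is an edge, so it is a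
stable set of one copy of `J`. A clique `K` of the join splits into a clique `K ∩ V(J₁)` of `J₁`
and a clique `K ∩ V(J₂)` of `J₂`, so it covers at most `ω(J₁) ω(J₂)` cross edges. All
`|V(J₁)| |V(J₂)|` cross edges must be covered, which bounds the size of any clique cover from below.
-/

namespace Finset

variable {α β : Type*}

lemma filter_isLeft_eq_map_toLeft (u : Finset (α ⊕ β)) :
    u.filter (fun x => x.isLeft = true) = u.toLeft.map .inl := by
  ext (a | b) <;> simp

lemma filter_isRight_eq_map_toRight (u : Finset (α ⊕ β)) :
    u.filter (fun x => x.isRight = true) = u.toRight.map .inr := by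
  ext (a | b) <;> simp

lemma card_filter_isLeft (u : Finset (α ⊕ β)) :
    #(u.filter (fun x => x.isLeft = true)) = #u.toLeft := by
  rw [filter_isLeft_eq_map_toLeft, card_map]

lemma card_filter_isRight (u : Finset (α ⊕ β)) :
    #(u.filter (fun x => x.isRight = true)) = #u.toRight := by
  rw [filter_isRight_eq_map_toRight, card_map]

end Finset

namespace joinGraph

variable {V₁ V₂ : Type*} {J₁ : SimpleGraph V₁} {J₂ : SimpleGraph V₂}

lemma adj_inl_inr (a : V₁) (b : V₂) : (joinGraph J₁ J₂).Adj (.inl a) (.inr b) := trivial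

lemma isClique_toLeft {K : Finset (V₁ ⊕ V₂)} (hK : (joinGraph J₁ J₂).IsClique (K : Set _)) :
    J₁.IsClique (K.toLeft : Set V₁) := fun _ ha _ hb hab =>
  hK (mem_toLeft.1 ha) (mem_toLeft.1 hb) (Sum.inl_injective.ne hab)

lemma isClique_toRight {K : Finset (V₁ ⊕ V₂)} (hK : (joinGraph J₁ J₂).IsClique (K : Set _)) :
    J₂.IsClique (K.toRight : Set V₂) := fun _ ha _ hb hab =>
  hK (mem_toRight.1 ha) (mem_toRight.1 hb) (Sum.inr_injective.ne hab)

lemma isStableSet_toLeft {T : Finset (V₁ ⊕ V₂)} (hT : IsStableSet (joinGraph J₁ J₂) T) :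
    IsStableSet J₁ T.toLeft := fun _ ha _ hb hab =>
  hT (mem_toLeft.1 ha) (mem_toLeft.1 hb) (Sum.inl_injective.ne hab)

lemma isStableSet_toRight {T : Finset (V₁ ⊕ V₂)} (hT : IsStableSet (joinGraph J₁ J₂) T) :
    IsStableSet J₂ T.toRight := fun _ ha _ hb hab =>
  hT (mem_toRight.1 ha) (mem_toRight.1 hb) (Sum.inr_injective.ne hab)

lemma toLeft_eq_empty_or_toRight_eq_empty {T : Finset (V₁ ⊕ V₂)}
    (hT : IsStableSet (joinGraph J₁ J₂) T) : T.toLeft = ∅ ∨ T.toRight = ∅ := by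
  by_contra! ⟨⟨a, ha⟩, ⟨b, hb⟩⟩
  exact hT (mem_toLeft.1 ha) (mem_toRight.1 hb) Sum.inl_ne_inr (adj_inl_inr a b)

lemma card_lt_of_isStableSet {s : ℕ} (h₁ : ∀ T : Finset V₁, IsStableSet J₁ T → #T < s)
    (h₂ : ∀ T : Finset V₂, IsStableSet J₂ T → #T < s) {T : Finset (V₁ ⊕ V₂)}
    (hT : IsStableSet (joinGraph J₁ J₂) T) : #T < s := by
  rw [← card_toLeft_add_card_toRight]
  rcases toLeft_eq_empty_or_toRight_eq_empty hT with h | h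
  · simpa [h] using h₂ _ (isStableSet_toRight hT)
  · simpa [h] using h₁ _ (isStableSet_toLeft hT)

lemma card_toLeft_mul_card_toRight_le {ω₁ ω₂ : ℕ}
    (h₁ : ∀ K : Finset V₁, J₁.IsClique (K : Set V₁) → #K ≤ ω₁)
    (h₂ : ∀ K : Finset V₂, J₂.IsClique (K : Set V₂) → #K ≤ ω₂) {K : Finset (V₁ ⊕ V₂)}
    (hK : (joinGraph J₁ J₂).IsClique (K : Set _)) : #K.toLeft * #K.toRight ≤ ω₁ * ω₂ :=
  Nat.mul_le_mul (h₁ _ (isClique_toLeft hK)) (h₂ _ (isClique_toRight hK))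

lemma card_mul_card_le_card_mul_of_isCliqueCover [Fintype V₁] [Fintype V₂] {ω₁ ω₂ : ℕ}
    (h₁ : ∀ K : Finset V₁, J₁.IsClique (K : Set V₁) → #K ≤ ω₁)
    (h₂ : ∀ K : Finset V₂, J₂.IsClique (K : Set V₂) → #K ≤ ω₂) {C : Finset (Finset (V₁ ⊕ V₂))}
    (hC : IsCliqueCover (joinGraph J₁ J₂) C) :
    Fintype.card V₁ * Fintype.card V₂ ≤ #C * (ω₁ * ω₂) := by
  classical
  have hcover : (univ : Finset (V₁ × V₂)) ⊆ C.biUnion fun X => X.toLeft ×ˢ X.toRight := by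
    rintro ⟨a, b⟩ -
    obtain ⟨X, hX, ha, hb⟩ := hC.2 _ _ (adj_inl_inr a b)
    exact mem_biUnion.2 ⟨X, hX, mem_product.2 ⟨mem_toLeft.2 ha, mem_toRight.2 hb⟩⟩
  calc Fintype.card V₁ * Fintype.card V₂ = #(univ : Finset (V₁ × V₂)) := by simp
    _ ≤ ∑ X ∈ C, #(X.toLeft ×ˢ X.toRight) := (card_le_card hcover).trans card_biUnion_le
    _ ≤ ∑ _X ∈ C, ω₁ * ω₂ := sum_le_sum fun X hX => by
      rw [card_product]
      exact card_toLeft_mul_card_toRight_le h₁ h₂ (hC.1 X hX)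
    _ = #C * (ω₁ * ω₂) := by rw [sum_const, smul_eq_mul]

end joinGraph

theorem stmt_16_general {V : Type*} [Fintype V] (J : SimpleGraph V) (s W : ℕ)
    (hω : ∀ K : Finset V, J.IsClique (K : Set V) → K.card ≤ W)
    (hα : ∀ T : Finset V, IsStableSet J T → T.card < s) :
    Fintype.card (V ⊕ V) = 2 * Fintype.card V ∧
    (∀ T : Finset (V ⊕ V), IsStableSet (joinGraph J J) T → T.card < s) ∧
    (∀ K : Finset (V ⊕ V), (joinGraph J J).IsClique (K : Set (V ⊕ V)) →
      (K.filter (fun x => x.isLeft = true)).card *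
        (K.filter (fun x => x.isRight = true)).card ≤ W ^ 2) ∧
    ∀ C : Finset (Finset (V ⊕ V)), IsCliqueCover (joinGraph J J) C →
      (Fintype.card V : ℝ) ^ 2 / (W : ℝ) ^ 2 ≤ (C.card : ℝ) := by
  refine ⟨by rw [Fintype.card_sum, two_mul], fun T hT => joinGraph.card_lt_of_isStableSet hα hα hT,
    fun K hK => ?_, fun C hC => ?_⟩
  · rw [card_filter_isLeft, card_filter_isRight, sq]
    exact joinGraph.card_toLeft_mul_card_toRight_le hω hω hK
  · have hcount := joinGraph.card_mul_card_le_card_mul_of_isCliqueCover hω hω hC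
    rw [← sq, ← sq] at hcount
    rcases W.eq_zero_or_pos with rfl | hW
    · simp -- the left side is `m² / 0 = 0` in `ℝ`
    rw [div_le_iff₀ (by positivity)]
    exact_mod_cast hcount

/-- Let `J` have `m` vertices, `ω(J) ≤ W` and `α(J) < s`, and let `G` be the join of two
copies of `J`. Then `G` has `2m` vertices, `α(G) < s`, every clique of `G` covers at most
`W²` of the `m²` cross edges, and every clique cover of `G` has size at least `m²/W²`. -/
theorem stmt_16 {V : Type*} [Fintype V] [DecidableEq V] (J : SimpleGraph V) (s W : ℕ)
    (hω : ∀ K : Finset V, J.IsClique (K : Set V) → K.card ≤ W)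
    (hα : ∀ T : Finset V, IsStableSet J T → T.card < s) :
    Fintype.card (V ⊕ V) = 2 * Fintype.card V ∧
    (∀ T : Finset (V ⊕ V), IsStableSet (joinGraph J J) T → T.card < s) ∧
    (∀ K : Finset (V ⊕ V), (joinGraph J J).IsClique (K : Set (V ⊕ V)) →
      (K.filter (fun x => x.isLeft = true)).card *
        (K.filter (fun x => x.isRight = true)).card ≤ W ^ 2) ∧
    ∀ C : Finset (Finset (V ⊕ V)), IsCliqueCover (joinGraph J J) C →
      (Fintype.card V : ℝ) ^ 2 / (W : ℝ) ^ 2 ≤ (C.card : ℝ) :=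
  stmt_16_general J s W hω hα
end

section
/- Assume that for infinitely many m there exists a graph J on m vertices with α(J) < s and ω(J) < C·m^{2/(s+1)}·log m (for fixed s ≥ 3 and constant C). Then there exists c > 0 such that for infinitely many n there is a graph G on n vertices with no stable set of size s such that every clique cover of G has size at least c·n^{2−4/(s+1)}/(log n)². -/
open SimpleGraph Finset

/-!
A graph with no stable set of size `s` has many edges: every `s`-set of vertices contains an
edge, and each edge lies in only `C(n-2, s-2)` of the `s`-sets, so it has at least
`C(n,2) / C(s,2)` edges. A clique of size at most `ω` covers at most `C(ω,2)` edges, so a clique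
cover needs at least `n² / (s² ω²)` cliques. Taking `G = J` with
`ω < C m^{2/(s+1)} log m` gives the bound with `c = 1 / (s² C²)`.
-/

namespace SimpleGraph

variable {V : Type*} [Fintype V] [DecidableEq V] {G : SimpleGraph V} [DecidableRel G.Adj]

lemma exists_mem_cliqueFinset_two_subset_of_not_isStableSet {T : Finset V}
    (hT : ¬IsStableSet G T) : ∃ e ∈ G.cliqueFinset 2, e ⊆ T := by
  simp only [IsStableSet, not_forall, not_not] at hT
  obtain ⟨u, hu, v, hv, huv, hadj⟩ := hT
  refine ⟨{u, v}, ?_, by simp [insert_subset_iff, hu, hv]⟩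
  rw [mem_cliqueFinset_iff, isNClique_iff, coe_pair]
  exact ⟨isClique_pair.2 fun _ => hadj, card_pair huv⟩

lemma choose_le_card_cliqueFinset_two_mul_choose {s : ℕ} (hs : 2 ≤ s)
    (hα : ∀ T : Finset V, IsStableSet G T → #T < s) :
    (Fintype.card V).choose s ≤ #(G.cliqueFinset 2) * (Fintype.card V - 2).choose (s - 2) := by
  have h := card_mul_le_card_mul (fun (S e : Finset V) => e ⊆ S) (m := 1)
    (s := univ.powersetCard s) (t := G.cliqueFinset 2)
    (n := (Fintype.card V - 2).choose (s - 2)) ?_ ?_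
  · simpa [card_powersetCard] using h
  · intro S hS
    have hSs : #S = s := (mem_powersetCard.1 hS).2
    obtain ⟨e, he, heS⟩ := exists_mem_cliqueFinset_two_subset_of_not_isStableSet
      fun hst => (hα S hst).ne hSs
    exact one_le_card.2 ⟨e, mem_filter.2 ⟨he, heS⟩⟩
  · intro e he
    have he2 : #e = 2 := ((mem_cliqueFinset_iff).1 he).card_eq
    rw [bipartiteBelow, card_filter_powersetCard_subset e univ s (subset_univ e) (he2 ▸ hs),
      he2, card_univ]

theorem choose_two_le_card_cliqueFinset_two_mul_choose_two {s : ℕ} (hs : 2 ≤ s)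
    (hsV : s ≤ Fintype.card V) (hα : ∀ T : Finset V, IsStableSet G T → #T < s) :
    (Fintype.card V).choose 2 ≤ #(G.cliqueFinset 2) * s.choose 2 := by
  have hpos : 0 < (Fintype.card V - 2).choose (s - 2) := Nat.choose_pos (by omega)
  refine Nat.le_of_mul_le_mul_right ?_ hpos
  calc (Fintype.card V).choose 2 * (Fintype.card V - 2).choose (s - 2)
      = (Fintype.card V).choose s * s.choose 2 := (Nat.choose_mul hs).symm
    _ ≤ #(G.cliqueFinset 2) * (Fintype.card V - 2).choose (s - 2) * s.choose 2 :=
      Nat.mul_le_mul_right _ (choose_le_card_cliqueFinset_two_mul_choose hs hα)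
    _ = #(G.cliqueFinset 2) * s.choose 2 * (Fintype.card V - 2).choose (s - 2) := by ring

lemma card_cliqueFinset_two_le_sum_choose_two {𝒞 : Finset (Finset V)}
    (h𝒞 : IsCliqueCover G 𝒞) : #(G.cliqueFinset 2) ≤ ∑ X ∈ 𝒞, (#X).choose 2 := by
  calc #(G.cliqueFinset 2) ≤ #(𝒞.biUnion (powersetCard 2)) := by
        refine card_le_card fun e he => ?_
        obtain ⟨u, v, huv, rfl⟩ := card_eq_two.1 ((mem_cliqueFinset_iff).1 he).card_eq
        have hadj : G.Adj u v := ((mem_cliqueFinset_iff).1 he).isClique (by simp) (by simp) huv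
        obtain ⟨X, hX, hu, hv⟩ := h𝒞.2 u v hadj
        exact mem_biUnion.2 ⟨X, hX, mem_powersetCard.2 ⟨by simp [insert_subset_iff, hu, hv],
          card_pair huv⟩⟩
    _ ≤ ∑ X ∈ 𝒞, #(powersetCard 2 X) := card_biUnion_le
    _ = ∑ X ∈ 𝒞, (#X).choose 2 := by simp only [card_powersetCard]

theorem sq_card_le_mul_card_of_isCliqueCover {s : ℕ} {B : ℝ} (hs : 2 ≤ s)
    (hsV : s ≤ Fintype.card V) (hα : ∀ T : Finset V, IsStableSet G T → #T < s)
    (hω : ∀ K : Finset V, G.IsClique (K : Set V) → (#K : ℝ) ≤ B)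
    {𝒞 : Finset (Finset V)} (h𝒞 : IsCliqueCover G 𝒞) :
    (Fintype.card V : ℝ) ^ 2 ≤ s ^ 2 * B ^ 2 * #𝒞 := by
  set n := Fintype.card V
  set E := #(G.cliqueFinset 2)
  have hlow : (n.choose 2 : ℝ) ≤ E * s.choose 2 := by
    exact_mod_cast choose_two_le_card_cliqueFinset_two_mul_choose_two hs hsV hα
  have hup : (E : ℝ) ≤ #𝒞 * (B ^ 2 / 2) := by
    calc (E : ℝ) ≤ ∑ X ∈ 𝒞, ((#X).choose 2 : ℝ) := by
          exact_mod_cast card_cliqueFinset_two_le_sum_choose_two h𝒞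
      _ ≤ ∑ _X ∈ 𝒞, B ^ 2 / 2 := by
          refine sum_le_sum fun X hX => ?_
          have hXB : (#X : ℝ) ^ 2 ≤ B ^ 2 :=
            pow_le_pow_left₀ (Nat.cast_nonneg _) (hω X (h𝒞.1 X hX)) 2
          rw [Nat.cast_choose_two]
          nlinarith [(Nat.cast_nonneg #X : (0 : ℝ) ≤ #X)]
      _ = #𝒞 * (B ^ 2 / 2) := by rw [sum_const, nsmul_eq_mul]
  rw [Nat.cast_choose_two, Nat.cast_choose_two] at hlow
  have hn : (2 : ℝ) ≤ n := by exact_mod_cast hs.trans hsV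
  have hs' : (2 : ℝ) ≤ s := by exact_mod_cast hs
  have hs2 : (s : ℝ) * (s - 1) ≤ s ^ 2 := by nlinarith
  calc (n : ℝ) ^ 2 ≤ 2 * (n * (n - 1)) := by nlinarith
    _ ≤ 4 * (E * (s * (s - 1) / 2)) := by linarith
    _ ≤ 4 * (#𝒞 * (B ^ 2 / 2) * (s * (s - 1) / 2)) := by gcongr; nlinarith
    _ = (s * (s - 1)) * B ^ 2 * #𝒞 := by ring
    _ ≤ s ^ 2 * B ^ 2 * #𝒞 := by gcongr

end SimpleGraph

lemma rpow_two_sub_eq_div_sq {x : ℝ} (hx : 0 < x) (a : ℝ) :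
    x ^ (2 - 2 * a) = x ^ 2 / (x ^ a) ^ 2 := by
  rw [Real.rpow_sub hx, two_mul, Real.rpow_add hx, Real.rpow_two, ← sq]

/-- Fix `s ≥ 3` and `C > 0`. Assume that for infinitely many `m` there is a graph `J`
on `m` vertices with `α(J) < s` and `ω(J) < C·m^{2/(s+1)}·log m`. Then there exists
`c > 0` such that for infinitely many `n` there is a graph `G` on `n` vertices with no
stable set of size `s` such that every clique cover of `G` has size at least
`c·n^{2-4/(s+1)}/(log n)²`. -/
theorem stmt_18 (s : ℕ) (hs : 3 ≤ s) (C : ℝ) (hC : 0 < C)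
    (hyp : ∀ N : ℕ, ∃ m : ℕ, N ≤ m ∧ ∃ J : SimpleGraph (Fin m),
      (∀ T : Finset (Fin m), IsStableSet J T → T.card < s) ∧
      (∀ K : Finset (Fin m), J.IsClique (K : Set (Fin m)) →
        (K.card : ℝ) < C * (m : ℝ) ^ ((2 : ℝ) / (s + 1 : ℝ)) * Real.logb 2 m)) :
    ∃ c : ℝ, 0 < c ∧ ∀ N : ℕ, ∃ n : ℕ, N ≤ n ∧ ∃ G : SimpleGraph (Fin n),
      (∀ T : Finset (Fin n), IsStableSet G T → T.card < s) ∧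
      ∀ 𝒞 : Finset (Finset (Fin n)), IsCliqueCover G 𝒞 →
        c * (n : ℝ) ^ ((2 : ℝ) - 4 / (s + 1 : ℝ)) / (Real.logb 2 n) ^ 2 ≤ (𝒞.card : ℝ) := by
  classical
  refine ⟨1 / (s ^ 2 * C ^ 2), by positivity, fun N => ?_⟩
  obtain ⟨m, hm, J, hα, hω⟩ := hyp (max N s)
  refine ⟨m, le_of_max_le_left hm, J, hα, fun 𝒞 h𝒞 => ?_⟩
  have hsm : s ≤ m := le_of_max_le_right hm
  have key := J.sq_card_le_mul_card_of_isCliqueCover (by omega) (by simpa using hsm) hα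
    (fun K hK => (hω K hK).le) h𝒞
  rw [Fintype.card_fin] at key
  have hm1 : (1 : ℝ) < m := by exact_mod_cast (by omega : 1 < m)
  have hlog : 0 < Real.logb 2 m := Real.logb_pos one_lt_two hm1
  have hpow : 0 < (m : ℝ) ^ ((2 : ℝ) / (s + 1 : ℝ)) := Real.rpow_pos_of_pos (by linarith) _
  have hs0 : (0 : ℝ) < s := by exact_mod_cast (by omega : 0 < s)
  rw [show (2 : ℝ) - 4 / (s + 1 : ℝ) = 2 - 2 * (2 / (s + 1 : ℝ)) by ring,
    rpow_two_sub_eq_div_sq (by linarith)]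
  set P := (m : ℝ) ^ ((2 : ℝ) / (s + 1 : ℝ))
  calc _ = (m : ℝ) ^ 2 / (s ^ 2 * (C * P * Real.logb 2 m) ^ 2) := by field_simp
    _ ≤ #𝒞 := by rw [div_le_iff₀ (by positivity)]; linarith
end
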